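/- arXiv:2402.05744 — 8 statements merged into one kernel-verified Lean document; each statement's English description precedes it below -/
import Mathlib

section
/- Abstract locking-sequence lemma: Let S ⊆ ℕ be an infinite set, let M be a function from finite sequences over ℕ to ℕ, and suppose that for every sequence f : ℕ → ℕ with range exactly S, the sequence n ↦ M(f↾n) converges. Then for every finite sequence σ with range contained in S, there is a finite extension σ' of σ with range contained in S such that M(τ) = M(σ') for every finite extension τ of σ' with range contained in S. -/
/-- The first `n` values of `f` as a list (`f↾n`). -/
def initSeg (f : ℕ → ℕ) (n : ℕ) : List ℕ := (List.range n).map f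

/-- abstract locking-sequence lemma: let `S ⊆ ℕ` be infinite and
`M : List ℕ → ℕ` be such that for every `f : ℕ → ℕ` with range exactly `S` the sequence
`n ↦ M (f↾n)` is eventually constant. Then every finite sequence `σ` with range in `S`
has a finite extension `σ'` with range in `S` such that `M τ = M σ'` for every finite
extension `τ` of `σ'` with range in `S`. -/
theorem abstract_locking_sequence (S : Set ℕ) (hS : S.Infinite)
    (M : List ℕ → ℕ)
    (hconv : ∀ f : ℕ → ℕ, Set.range f = S →
      ∃ (N : ℕ) (c : ℕ), ∀ n ≥ N, M (initSeg f n) = c) :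
    ∀ σ : List ℕ, (∀ x ∈ σ, x ∈ S) →
      ∃ σ' : List ℕ, σ <+: σ' ∧ (∀ x ∈ σ', x ∈ S) ∧
        ∀ τ : List ℕ, σ' <+: τ → (∀ x ∈ τ, x ∈ S) → M τ = M σ' := by
  intro σ hσ
  by_contra hcon
  push_neg at hcon
  -- an enumeration of S
  obtain ⟨e, he⟩ := (Set.to_countable S).exists_eq_range hS.nonempty
  have heS : ∀ k, e k ∈ S := fun k => he ▸ Set.mem_range_self k
  -- from the negation, a total choice function giving a "changing" extension
  have h' : ∀ σ' : List ℕ, ∃ τ : List ℕ,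
      (σ <+: σ' ∧ ∀ x ∈ σ', x ∈ S) →
        (σ' <+: τ ∧ (∀ x ∈ τ, x ∈ S) ∧ M τ ≠ M σ') := by
    intro σ'
    by_cases hcase : σ <+: σ' ∧ ∀ x ∈ σ', x ∈ S
    · obtain ⟨τ, h1, h2, h3⟩ := hcon σ' hcase.1 hcase.2
      exact ⟨τ, fun _ => ⟨h1, h2, h3⟩⟩
    · exact ⟨σ', fun h => absurd h hcase⟩
  choose T hT using h'
  -- the recursive chain of lists
  set l : ℕ → List ℕ := fun k => Nat.rec σ (fun k ih => T (ih ++ [e k])) k with hl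
  have hl0 : l 0 = σ := rfl
  have hls : ∀ k, l (k + 1) = T (l k ++ [e k]) := fun k => rfl
  -- invariant: prefix of σ and range in S
  have inv : ∀ k, (σ <+: l k) ∧ (∀ x ∈ l k, x ∈ S) := by
    intro k
    induction k with
    | zero => exact ⟨List.prefix_refl σ, hσ⟩
    | succ k ih =>
      have hmem : ∀ x ∈ l k ++ [e k], x ∈ S := by
        intro x hx
        rcases List.mem_append.1 hx with h | h
        · exact ih.2 x h
        · simp at h; subst h; exact heS k
      have hpre : σ <+: l k ++ [e k] := ih.1.trans (List.prefix_append _ _)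
      obtain ⟨h1, h2, _⟩ := hT (l k ++ [e k]) ⟨hpre, hmem⟩
      rw [hls k]
      exact ⟨hpre.trans h1, h2⟩
  have step : ∀ k, (l k ++ [e k]) <+: l (k + 1) ∧ M (l (k + 1)) ≠ M (l k ++ [e k]) := by
    intro k
    have hmem : ∀ x ∈ l k ++ [e k], x ∈ S := by
      intro x hx
      rcases List.mem_append.1 hx with h | h
      · exact (inv k).2 x h
      · simp at h; subst h; exact heS k
    have hpre : σ <+: l k ++ [e k] := (inv k).1.trans (List.prefix_append _ _)
    obtain ⟨h1, _, h3⟩ := hT (l k ++ [e k]) ⟨hpre, hmem⟩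
    rw [hls k]
    exact ⟨h1, h3⟩
  -- the chain is monotone under prefix
  have mono : ∀ j k, j ≤ k → l j <+: l k := by
    intro j k hjk
    induction k with
    | zero => simp_all
    | succ k ih =>
      rcases Nat.lt_or_ge j (k + 1) with h | h
      · exact (ih (Nat.lt_succ_iff.mp h)).trans
          ((List.prefix_append _ _).trans (step k).1)
      · have : j = k + 1 := le_antisymm hjk h
        subst this; exact List.prefix_refl _
  -- lengths grow
  have hlen : ∀ k, k ≤ (l k).length := by
    intro k
    induction k with
    | zero => exact Nat.zero_le _
    | succ k ih =>
      have := (step k).1.length_le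
      simp at this
      omega
  -- the diagonal function
  set f : ℕ → ℕ := fun n => (l (n + 1)).getD n 0 with hf
  -- getD agrees along the chain
  have key : ∀ k n, n < (l k).length → f n = (l k).getD n 0 := by
    intro k n hn
    have hn1 : n < (l (n + 1)).length := lt_of_lt_of_le (Nat.lt_succ_self n) (hlen (n + 1))
    rcases le_or_gt k (n + 1) with h | h
    · have hp := mono k (n + 1) h
      rw [hf]
      simp only
      rw [List.getD_eq_getElem _ _ hn1, List.getD_eq_getElem _ _ hn]
      exact (hp.getElem hn).symm
    · have hp := mono (n + 1) k (Nat.le_of_lt h)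
      rw [hf]
      simp only
      rw [List.getD_eq_getElem _ _ hn1, List.getD_eq_getElem _ _ hn]
      exact hp.getElem hn1
  -- initial segments of f along the chain
  have hinit : ∀ (t : List ℕ) (k : ℕ), t <+: l k → initSeg f t.length = t := by
    intro t k hp
    apply List.ext_getElem
    · simp [initSeg]
    · intro i h1 h2
      simp only [initSeg, List.getElem_map, List.getElem_range]
      have hik : i < (l k).length := lt_of_lt_of_le h2 hp.length_le
      have := key k i hik
      rw [List.getD_eq_getElem _ _ hik] at this
      rw [hp.getElem h2]
      exact this
  -- range of f is S
  have hrange : Set.range f = S := by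
    apply Set.eq_of_subset_of_subset
    · rintro x ⟨n, rfl⟩
      have hn1 : n < (l (n + 1)).length := lt_of_lt_of_le (Nat.lt_succ_self n) (hlen (n + 1))
      have : f n ∈ l (n + 1) := by
        rw [hf]; simp only
        rw [List.getD_eq_getElem _ _ hn1]
        exact List.getElem_mem hn1
      exact (inv (n + 1)).2 _ this
    · intro x hx
      rw [he] at hx
      obtain ⟨k, rfl⟩ := hx
      refine ⟨(l k).length, ?_⟩
      have hp : l k ++ [e k] <+: l (k + 1) := (step k).1
      have hlt : (l k).length < (l k ++ [e k]).length := by simp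
      have hlt' : (l k).length < (l (k + 1)).length := lt_of_lt_of_le hlt hp.length_le
      have := key (k + 1) (l k).length hlt'
      rw [this, List.getD_eq_getElem _ _ hlt', ← hp.getElem hlt]
      simp
  -- contradiction with convergence
  obtain ⟨N, c, hc⟩ := hconv f hrange
  have hNlen : N ≤ (l N).length := hlen N
  have e1 : M (l N ++ [e N]) = c := by
    have h1 : initSeg f (l N ++ [e N]).length = l N ++ [e N] :=
      hinit _ (N + 1) (step N).1
    have : (l N ++ [e N]).length ≥ N := by simp; omega
    rw [← h1]; exact hc _ this
  have e2 : M (l (N + 1)) = c := by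
    have h1 : initSeg f (l (N + 1)).length = l (N + 1) :=
      hinit _ (N + 1) (List.prefix_refl _)
    have : (l (N + 1)).length ≥ N := le_trans (Nat.le_succ N) (hlen (N + 1))
    rw [← h1]; exact hc _ this
  exact (step N).2 (e1 ▸ e2)
end

section
/- Contrapositive locking-sequence construction: Let S ⊆ ℕ be infinite and M a function from finite sequences over ℕ to ℕ. If there exists a finite sequence σ with range ⊆ S such that every finite extension σ' of σ with range ⊆ S admits a further extension τ with range ⊆ S and M(τ) ≠ M(σ'), then there exists a function f : ℕ → ℕ with range exactly S such that n ↦ M(f↾n) does not converge (is not eventually constant). -/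
/-!
Enumerate `S` as `e 0, e 1, …` and build a chain of sequences in `S` starting at `σ`: at
stage `n` append `e n`, then pass to an extension on which `M` changes value. The chain
converges to some `f` whose initial segments include every stage, so `f` enumerates exactly `S`,
and `M` takes different values on the two initial segments produced at each stage.
-/

open List Set

/-- The limit of a chain of lists each extending the last; the default `0` is never read once
`C (k + 1)` is longer than `k`. -/
noncomputable def limitSeq (C : ℕ → List ℕ) (k : ℕ) : ℕ := (C (k + 1)).getD k 0

section PrefixChain

variable {C : ℕ → List ℕ} {e : ℕ → ℕ}

theorem prefix_of_le_of_append_prefix (hC : ∀ n, C n ++ [e n] <+: C (n + 1)) {a b : ℕ}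
    (hab : a ≤ b) : C a <+: C b := by
  induction b, hab using Nat.le_induction with
  | base => exact prefix_refl _
  | succ b _ ih => exact ih.trans ((prefix_append _ _).trans (hC b))

theorem le_length_of_append_prefix (hC : ∀ n, C n ++ [e n] <+: C (n + 1)) (n : ℕ) :
    n ≤ (C n).length := by
  induction n with
  | zero => exact Nat.zero_le _
  | succ n ih =>
    have := (hC n).length_le
    simp only [length_append, length_singleton] at this
    omega

theorem limitSeq_eq_getElem (hC : ∀ n, C n ++ [e n] <+: C (n + 1)) {l : List ℕ} {m k : ℕ}
    (hl : l <+: C m) (hk : k < l.length) : limitSeq C k = l[k] := by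
  have hk₁ : k < (C (k + 1)).length := le_length_of_append_prefix hC (k + 1)
  have hkm : k < (C m).length := hk.trans_le hl.length_le
  rw [limitSeq, getD_eq_getElem _ _ hk₁, hl.getElem hk]
  rcases le_total (k + 1) m with hle | hle
  · exact (prefix_of_le_of_append_prefix hC hle).getElem hk₁
  · exact ((prefix_of_le_of_append_prefix hC hle).getElem hkm).symm

theorem initSeg_limitSeq (hC : ∀ n, C n ++ [e n] <+: C (n + 1)) {l : List ℕ} {m : ℕ}
    (hl : l <+: C m) : initSeg (limitSeq C) l.length = l :=
  ext_getElem (by simp [initSeg]) fun k _ hk => by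
    simp only [initSeg, getElem_map, getElem_range, limitSeq_eq_getElem hC hl hk]

theorem limitSeq_mem (hC : ∀ n, C n ++ [e n] <+: C (n + 1)) (k : ℕ) :
    limitSeq C k ∈ C (k + 1) := by
  have hk : k < (C (k + 1)).length := le_length_of_append_prefix hC (k + 1)
  rw [limitSeq_eq_getElem hC (prefix_refl _) hk]
  exact getElem_mem hk

theorem mem_range_limitSeq (hC : ∀ n, C n ++ [e n] <+: C (n + 1)) (n : ℕ) :
    e n ∈ range (limitSeq C) :=
  ⟨(C n).length, by simp [limitSeq_eq_getElem hC (hC n) (by simp : (C n).length < _)]⟩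

theorem range_limitSeq (hC : ∀ n, C n ++ [e n] <+: C (n + 1))
    (hCe : ∀ n, ∀ x ∈ C n, x ∈ range e) : range (limitSeq C) = range e :=
  subset_antisymm (range_subset_iff.2 fun k => hCe (k + 1) _ (limitSeq_mem hC k))
    (range_subset_iff.2 (mem_range_limitSeq hC))

theorem not_eventually_const_initSeg_limitSeq {β : Type*} {M : List ℕ → β}
    (hC : ∀ n, C n ++ [e n] <+: C (n + 1)) (hM : ∀ n, M (C (n + 1)) ≠ M (C n ++ [e n])) :
    ¬ ∃ (N : ℕ) (c : β), ∀ n ≥ N, M (initSeg (limitSeq C) n) = c := by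
  rintro ⟨N, c, hc⟩
  have hN := le_length_of_append_prefix hC N
  have hN₁ := le_length_of_append_prefix hC (N + 1)
  apply hM N
  rw [← initSeg_limitSeq hC (prefix_refl (C (N + 1))), ← initSeg_limitSeq hC (hC N),
    hc _ (by omega), hc _ (by simp; omega)]

end PrefixChain

def extendChain {α : Type*} (g : List α → List α) (e : ℕ → α) (σ : List α) : ℕ → List α
  | 0 => σ
  | n + 1 => g (extendChain g e σ n ++ [e n])

theorem exists_chain_append_prefix_ne {α β : Type*} {P : List α → Prop} {M : List α → β}
    {e : ℕ → α} {σ : List α} (hσ : P σ) (happend : ∀ l n, P l → P (l ++ [e n]))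
    (hext : ∀ l, P l → ∃ τ, l <+: τ ∧ P τ ∧ M τ ≠ M l) :
    ∃ C : ℕ → List α, (∀ n, P (C n)) ∧ (∀ n, C n ++ [e n] <+: C (n + 1)) ∧
      ∀ n, M (C (n + 1)) ≠ M (C n ++ [e n]) := by
  have hext' : ∀ l, ∃ τ, l <+: τ ∧ (P l → P τ ∧ M τ ≠ M l) := fun l => by
    by_cases hl : P l
    · obtain ⟨τ, hlτ, hτ⟩ := hext l hl
      exact ⟨τ, hlτ, fun _ => hτ⟩
    · exact ⟨l, prefix_refl l, fun h => absurd h hl⟩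
  choose g hg_prefix hg using hext'
  have hP : ∀ n, P (extendChain g e σ n) := by
    intro n
    induction n with
    | zero => exact hσ
    | succ n ih => exact (hg _ (happend _ n ih)).1
  exact ⟨extendChain g e σ, hP, fun n => hg_prefix _, fun n => (hg _ (happend _ n (hP n))).2⟩

/-- contrapositive locking-sequence construction: let `S ⊆ ℕ` be infinite
and `M : List ℕ → ℕ`. If some finite sequence `σ` with range in `S` is such that every
finite extension `σ'` of `σ` with range in `S` has a further extension `τ` with range in
`S` and `M τ ≠ M σ'`, then there is an enumeration `f` of `S` (range exactly `S`) on
which `n ↦ M (f↾n)` is not eventually constant. -/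
theorem locking_sequence_contrapositive (S : Set ℕ) (hS : S.Infinite)
    (M : List ℕ → ℕ) (σ : List ℕ) (hσ : ∀ x ∈ σ, x ∈ S)
    (h : ∀ σ' : List ℕ, σ <+: σ' → (∀ x ∈ σ', x ∈ S) →
      ∃ τ : List ℕ, σ' <+: τ ∧ (∀ x ∈ τ, x ∈ S) ∧ M τ ≠ M σ') :
    ∃ f : ℕ → ℕ, Set.range f = S ∧
      ¬ ∃ (N : ℕ) (c : ℕ), ∀ n ≥ N, M (initSeg f n) = c := by
  obtain ⟨e, rfl⟩ := S.to_countable.exists_eq_range hS.nonempty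
  have happend : ∀ l n, σ <+: l ∧ (∀ x ∈ l, x ∈ range e) →
      σ <+: l ++ [e n] ∧ ∀ x ∈ l ++ [e n], x ∈ range e := fun l n hl =>
    ⟨hl.1.trans (prefix_append _ _), fun x hx =>
      (mem_append.1 hx).elim (hl.2 x) fun hx => mem_singleton.1 hx ▸ mem_range_self n⟩
  obtain ⟨C, hCadm, hC, hM⟩ := exists_chain_append_prefix_ne ⟨prefix_refl σ, hσ⟩ happend
    fun l hl => (h l hl.1 hl.2).imp fun τ hτ => ⟨hτ.1, ⟨hl.1.trans hτ.1, hτ.2.1⟩, hτ.2.2⟩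
  exact ⟨limitSeq C, range_limitSeq hC fun n => (hCadm n).2,
    not_eventually_const_initSeg_limitSeq hC hM⟩
end

section
/- There is no Scott-continuous (monotone and compact) operator Γ on P(ℕ) mapping positive atomic diagrams of structures of type [ω:1, 1:1] to positive atomic diagrams of structures of type [1:ω], and positive atomic diagrams of structures of type [ω:1, 2:1] to positive atomic diagrams of structures of type [2:ω]. -/
/-- `E` is an equivalence relation on the set `A ⊆ ℕ` (with support contained in `A`). -/
def isEquivOn (A : Set ℕ) (E : ℕ → ℕ → Prop) : Prop :=
  (∀ a b, E a b → a ∈ A ∧ b ∈ A) ∧ (∀ a ∈ A, E a a) ∧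
    (∀ a b, E a b → E b a) ∧ (∀ a b c, E a b → E b c → E a c)

/-- Code of the positive atomic diagram of the equivalence structure `(A, E)`:
codes of the true sentences `a ∼ b` (tag 0), `a = a` (tag 1), and `a ≠ b` (tag 2). -/
def posDiagEq (A : Set ℕ) (E : ℕ → ℕ → Prop) : Set ℕ :=
  {c | ∃ a b, E a b ∧ c = Nat.pair 0 (Nat.pair a b)} ∪
    {c | ∃ a ∈ A, c = Nat.pair 1 a} ∪
    {c | ∃ a ∈ A, ∃ b ∈ A, a ≠ b ∧ c = Nat.pair 2 (Nat.pair a b)}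

/-- The `E`-equivalence class of `a`. -/
def classOf (E : ℕ → ℕ → Prop) (a : ℕ) : Set ℕ := {b | E a b}

/-- The set of `E`-equivalence classes of elements of `A`. -/
def classesOf (A : Set ℕ) (E : ℕ → ℕ → Prop) : Set (Set ℕ) :=
  {C | ∃ a ∈ A, C = classOf E a}

/-- `(A, E)` has type `[ω:1, 1:1]`: exactly two classes, one infinite and one a singleton. -/
def typeW1_11 (A : Set ℕ) (E : ℕ → ℕ → Prop) : Prop :=
  isEquivOn A E ∧ ∃ s ∈ A, classOf E s = {s} ∧ (A \ {s}).Infinite ∧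
    ∀ a ∈ A, a ≠ s → ∀ b ∈ A, b ≠ s → E a b

/-- `(A, E)` has type `[ω:1, 2:1]`: exactly two classes, one infinite and one of size 2. -/
def typeW1_21 (A : Set ℕ) (E : ℕ → ℕ → Prop) : Prop :=
  isEquivOn A E ∧ ∃ p ∈ A, ∃ q ∈ A, p ≠ q ∧ classOf E p = {p, q} ∧
    (A \ {p, q}).Infinite ∧ ∀ a ∈ A \ {p, q}, ∀ b ∈ A \ {p, q}, E a b

/-- `(A, E)` has type `[1:ω]`: infinitely many classes, all of size exactly 1. -/
def type1W (A : Set ℕ) (E : ℕ → ℕ → Prop) : Prop :=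
  isEquivOn A E ∧ A.Infinite ∧ ∀ a b, E a b → a = b

/-- `(A, E)` has type `[2:ω]`: infinitely many classes, all of size exactly 2. -/
def type2W (A : Set ℕ) (E : ℕ → ℕ → Prop) : Prop :=
  isEquivOn A E ∧ (∀ a ∈ A, (classOf E a).ncard = 2) ∧ (classesOf A E).Infinite

/-- there is no Scott-continuous (monotone and compact) operator `Γ` on
`P(ℕ)` mapping positive atomic diagrams of structures of type `[ω:1, 1:1]` to positive
atomic diagrams of structures of type `[1:ω]`, and positive atomic diagrams of structures
of type `[ω:1, 2:1]` to positive atomic diagrams of structures of type `[2:ω]`. -/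
theorem no_scott_operator_w111_to_1w_and_w121_to_2w :
    ¬ ∃ Γ : Set ℕ → Set ℕ,
      Monotone Γ ∧
      (∀ (X : Set ℕ) (x : ℕ), x ∈ Γ X ↔ ∃ D : Finset ℕ, ↑D ⊆ X ∧ x ∈ Γ ↑D) ∧
      (∀ A E, typeW1_11 A E →
        ∃ B F, type1W B F ∧ Γ (posDiagEq A E) = posDiagEq B F) ∧
      (∀ A E, typeW1_21 A E →
        ∃ B F, type2W B F ∧ Γ (posDiagEq A E) = posDiagEq B F) := by
  rintro ⟨Γ, hmono, -, h11, h21⟩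
  -- the [ω:1,2:1] structure: classes {1,2} and {n ≥ 3}
  set E : ℕ → ℕ → Prop := fun a b => (a ∈ ({1,2} : Set ℕ) ∧ b ∈ ({1,2} : Set ℕ)) ∨ (3 ≤ a ∧ 3 ≤ b) with hE
  set A : Set ℕ := {n | 1 ≤ n} with hA
  -- the [ω:1,1:1] structure: classes {0} and {n ≥ 1}
  set E' : ℕ → ℕ → Prop := fun a b => (a = 0 ∧ b = 0) ∨ (1 ≤ a ∧ 1 ≤ b) with hE'
  have hmem : ∀ a : ℕ, a ∈ A ↔ 1 ≤ a := fun a => Iff.rfl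
  have h12 : ∀ a : ℕ, a ∈ ({1,2} : Set ℕ) ↔ a = 1 ∨ a = 2 := fun a => Iff.rfl
  have htype21 : typeW1_21 A E := by
    refine ⟨⟨?_, ?_, ?_, ?_⟩, 1, ?_, 2, ?_, ?_, ?_, ?_, ?_⟩
    · rintro a b (⟨ha, hb⟩ | ⟨ha, hb⟩) <;>
        simp only [hmem, h12] at * <;> omega
    · intro a ha; simp only [hmem] at ha
      rcases Nat.lt_or_ge a 3 with h | h
      · exact Or.inl ⟨by simp only [h12]; omega, by simp only [h12]; omega⟩
      · exact Or.inr ⟨h, h⟩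
    · rintro a b (⟨ha, hb⟩ | ⟨ha, hb⟩)
      exacts [Or.inl ⟨hb, ha⟩, Or.inr ⟨hb, ha⟩]
    · rintro a b c (⟨ha, hb⟩ | ⟨ha, hb⟩) (⟨hb', hc⟩ | ⟨hb', hc⟩) <;>
        first
        | exact Or.inl ⟨ha, hc⟩
        | exact Or.inr ⟨ha, hc⟩
        | (exfalso; simp only [h12] at * ; omega)
    · simp [hmem]
    · simp [hmem]
    · omega
    · ext b
      constructor
      · rintro (⟨h1, hb⟩ | ⟨h1, hb⟩)
        · exact hb
        · omega
      · intro hb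
        exact Or.inl ⟨by simp [h12], hb⟩
    · refine Set.Infinite.mono (s := {n | 3 ≤ n}) ?_ (Set.infinite_of_not_bddAbove (by
          rintro ⟨m, hm⟩
          have := hm (show m + 3 ∈ {n | 3 ≤ n} by simp)
          omega))
      intro n hn
      simp only [Set.mem_setOf_eq] at hn
      refine ⟨(hmem n).2 (by omega), ?_⟩
      simp only [Set.mem_insert_iff, Set.mem_singleton_iff]; omega
    · rintro a ⟨ha, ha'⟩ b ⟨hb, hb'⟩
      simp only [hmem] at ha hb
      simp only [Set.mem_insert_iff, Set.mem_singleton_iff] at ha' hb'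
      exact Or.inr ⟨by omega, by omega⟩
  have htype11 : typeW1_11 Set.univ E' := by
    refine ⟨⟨?_, ?_, ?_, ?_⟩, 0, trivial, ?_, ?_, ?_⟩
    · intro a b _; exact ⟨trivial, trivial⟩
    · intro a _
      rcases Nat.eq_zero_or_pos a with h | h
      · exact Or.inl ⟨h, h⟩
      · exact Or.inr ⟨h, h⟩
    · rintro a b (⟨ha, hb⟩ | ⟨ha, hb⟩)
      exacts [Or.inl ⟨hb, ha⟩, Or.inr ⟨hb, ha⟩]
    · rintro a b c (⟨ha, hb⟩ | ⟨ha, hb⟩) (⟨hb', hc⟩ | ⟨hb', hc⟩) <;>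
        first
        | exact Or.inl ⟨ha, hc⟩
        | exact Or.inr ⟨ha, hc⟩
        | omega
    · ext b
      constructor
      · rintro (⟨h1, hb⟩ | ⟨h1, hb⟩)
        · exact hb
        · omega
      · rintro rfl; exact Or.inl ⟨rfl, rfl⟩
    · refine Set.Infinite.mono (s := {n | 1 ≤ n}) ?_ (Set.infinite_of_not_bddAbove (by
          rintro ⟨m, hm⟩
          have := hm (show m + 1 ∈ {n | 1 ≤ n} by simp)
          omega))
      intro n hn
      simp only [Set.mem_setOf_eq] at hn
      exact ⟨trivial, by simp only [Set.mem_singleton_iff]; omega⟩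
    · intro a _ ha b _ hb
      exact Or.inr ⟨Nat.pos_of_ne_zero ha, Nat.pos_of_ne_zero hb⟩
  -- diagram inclusion
  have hsub : posDiagEq A E ⊆ posDiagEq Set.univ E' := by
    rintro c ((⟨a, b, hab, rfl⟩ | ⟨a, ha, rfl⟩) | ⟨a, ha, b, hb, hne, rfl⟩)
    · refine Or.inl (Or.inl ⟨a, b, ?_, rfl⟩)
      rcases hab with ⟨ha, hb⟩ | ⟨ha, hb⟩ <;>
        simp only [h12] at * <;> exact Or.inr ⟨by omega, by omega⟩
    · exact Or.inl (Or.inr ⟨a, trivial, rfl⟩)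
    · exact Or.inr ⟨a, trivial, b, trivial, hne, rfl⟩
  obtain ⟨B, F, ⟨hFeq, hF2, hFinf⟩, hΓ21⟩ := h21 A E htype21
  obtain ⟨B', F', ⟨hF'eq, hB'inf, hF'1⟩, hΓ11⟩ := h11 Set.univ E' htype11
  -- find a 2-element class in (B, F)
  obtain ⟨C, a, haB, rfl⟩ := hFinf.nonempty
  obtain ⟨x, y, hxy, hCl⟩ := Set.ncard_eq_two.mp (hF2 a haB)
  have haC : a ∈ classOf F a := hFeq.2.1 a haB
  rw [hCl] at haC
  have hpair : ∃ b, F a b ∧ a ≠ b := by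
    rcases haC with rfl | rfl
    · refine ⟨y, ?_, hxy⟩
      have : y ∈ classOf F a := by rw [hCl]; exact Or.inr rfl
      exact this
    · refine ⟨x, ?_, hxy.symm⟩
      have : x ∈ classOf F a := by rw [hCl]; exact Or.inl rfl
      exact this
  obtain ⟨b, hFab, hab⟩ := hpair
  have hc : Nat.pair 0 (Nat.pair a b) ∈ posDiagEq B F :=
    Or.inl (Or.inl ⟨a, b, hFab, rfl⟩)
  have hc' : Nat.pair 0 (Nat.pair a b) ∈ posDiagEq B' F' := by
    rw [← hΓ11]
    exact hmono hsub (hΓ21 ▸ hc)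
  rcases hc' with (⟨a', b', hab', heq⟩ | ⟨a', _, heq⟩) | ⟨a', _, b', _, _, heq⟩
  · have h1 := Nat.pair_eq_pair.mp heq
    have h2 := Nat.pair_eq_pair.mp h1.2
    exact hab (h2.1 ▸ h2.2 ▸ hF'1 a' b' hab')
  · exact absurd (Nat.pair_eq_pair.mp heq).1 (by omega)
  · exact absurd (Nat.pair_eq_pair.mp heq).1 (by omega)
end

section
/- The class 𝔎 = {[ω:1], [ω:2]} of equivalence structures on subsets of ℕ (one infinite class, versus two infinite classes) is not TxtEx-learnable: there is no learner M from finite sequences of positive atomic facts to {0,1,?} such that for every structure 𝒮 isomorphic to [ω:1] or [ω:2] with domain ⊆ ℕ and every text 𝕋 for 𝒮, M(𝕋↾n) converges to the correct index (0 for type [ω:1], 1 for type [ω:2]). -/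
/-- `(A, E)` has type `[ω:1]`: exactly one equivalence class, which is infinite. -/
def typeW1 (A : Set ℕ) (E : ℕ → ℕ → Prop) : Prop :=
  isEquivOn A E ∧ A.Infinite ∧ ∀ a ∈ A, ∀ b ∈ A, E a b

/-- `(A, E)` has type `[ω:2]`: exactly two equivalence classes, both infinite. -/
def typeW2 (A : Set ℕ) (E : ℕ → ℕ → Prop) : Prop :=
  isEquivOn A E ∧ ∃ a ∈ A, ∃ b ∈ A, ¬ E a b ∧ (∀ c ∈ A, E c a ∨ E c b) ∧
    (classOf E a).Infinite ∧ (classOf E b).Infinite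

namespace W1W2Aux

/-- The full relation on ℕ: one infinite class. -/
def E1 : ℕ → ℕ → Prop := fun _ _ => True

lemma typeW1_E1 : typeW1 Set.univ E1 :=
  ⟨⟨fun _ _ _ => ⟨trivial, trivial⟩, fun _ _ => trivial, fun _ _ _ => trivial,
    fun _ _ _ _ _ => trivial⟩, Set.infinite_univ, fun _ _ _ _ => trivial⟩

/-- First class of the two-class structure with cut `k`. -/
def inC1 (k x : ℕ) : Prop := x < k ∨ x % 2 = 0

instance (k x : ℕ) : Decidable (inC1 k x) := by unfold inC1; infer_instance

/-- Two classes: `inC1 k` and its complement. -/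
def E2 (k : ℕ) (x y : ℕ) : Prop := (inC1 k x ∧ inC1 k y) ∨ (¬ inC1 k x ∧ ¬ inC1 k y)

instance (k x y : ℕ) : Decidable (E2 k x y) := by unfold E2; infer_instance

lemma typeW2_E2 (k : ℕ) : typeW2 Set.univ (E2 k) := by
  refine ⟨⟨fun _ _ _ => ⟨trivial, trivial⟩, fun a _ => ?_, fun a b h => ?_,
    fun a b c h1 h2 => ?_⟩, 0, trivial, 2*k+1, trivial, ?_, fun c _ => ?_, ?_, ?_⟩
  · by_cases h : inC1 k a
    · exact Or.inl ⟨h, h⟩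
    · exact Or.inr ⟨h, h⟩
  · unfold E2 at *; tauto
  · unfold E2 at *; tauto
  · have h0 : inC1 k 0 := Or.inr (by omega)
    have hb : ¬ inC1 k (2*k+1) := by unfold inC1; omega
    unfold E2; tauto
  · have h0 : inC1 k 0 := Or.inr (by omega)
    have hb : ¬ inC1 k (2*k+1) := by unfold inC1; omega
    by_cases h : inC1 k c
    · exact Or.inl (Or.inl ⟨h, h0⟩)
    · exact Or.inr (Or.inr ⟨h, hb⟩)
  · apply Set.infinite_of_injective_forall_mem (f := fun n : ℕ => 2*n)
    · intro a b h; dsimp at h; omega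
    · intro n
      have h0 : inC1 k 0 := Or.inr (by omega)
      exact Or.inl ⟨h0, Or.inr (by omega)⟩
  · apply Set.infinite_of_injective_forall_mem (f := fun n : ℕ => 2*(k+n)+1)
    · intro a b h; dsimp at h; omega
    · intro n
      have hb : ¬ inC1 k (2*k+1) := by unfold inC1; omega
      have hn : ¬ inC1 k (2*(k+n)+1) := by unfold inC1; omega
      exact Or.inr ⟨hb, hn⟩

/-- Enumeration of the positive diagram of `(univ, E1)`. -/
def enum1 (n : ℕ) : ℕ :=
  if n.unpair.1 = 0 then Nat.pair 0 n.unpair.2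
  else if n.unpair.1 = 1 then Nat.pair 1 n.unpair.2
  else if n.unpair.2.unpair.1 = n.unpair.2.unpair.2 then Nat.pair 1 0
  else Nat.pair 2 n.unpair.2

lemma mem_posDiag_iff {A : Set ℕ} {E : ℕ → ℕ → Prop} {c : ℕ} :
    c ∈ posDiagEq A E ↔ (∃ a b, E a b ∧ c = Nat.pair 0 (Nat.pair a b)) ∨
      (∃ a ∈ A, c = Nat.pair 1 a) ∨
      (∃ a ∈ A, ∃ b ∈ A, a ≠ b ∧ c = Nat.pair 2 (Nat.pair a b)) := by
  simp [posDiagEq, Set.mem_union, Set.mem_setOf_eq, or_assoc]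

lemma range_enum1 : Set.range enum1 = posDiagEq Set.univ E1 := by
  ext c
  constructor
  · rintro ⟨n, rfl⟩
    unfold enum1
    split_ifs with h1 h2 h3
    · exact mem_posDiag_iff.mpr (Or.inl ⟨n.unpair.2.unpair.1, n.unpair.2.unpair.2, trivial,
        by rw [Nat.pair_unpair]⟩)
    · exact mem_posDiag_iff.mpr (Or.inr (Or.inl ⟨n.unpair.2, trivial, rfl⟩))
    · exact mem_posDiag_iff.mpr (Or.inr (Or.inl ⟨0, trivial, rfl⟩))
    · exact mem_posDiag_iff.mpr (Or.inr (Or.inr ⟨n.unpair.2.unpair.1, trivial,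
        n.unpair.2.unpair.2, trivial, h3, by rw [Nat.pair_unpair]⟩))
  · intro hc
    rcases mem_posDiag_iff.mp hc with ⟨a, b, _, rfl⟩ | ⟨a, _, rfl⟩ | ⟨a, _, b, _, hab, rfl⟩
    · exact ⟨Nat.pair 0 (Nat.pair a b), by simp [enum1, Nat.unpair_pair]⟩
    · exact ⟨Nat.pair 1 a, by simp [enum1, Nat.unpair_pair]⟩
    · exact ⟨Nat.pair 2 (Nat.pair a b), by simp [enum1, Nat.unpair_pair, hab]⟩

/-- Enumeration of the positive diagram of `(univ, E2 k)`. -/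
def enum2 (k n : ℕ) : ℕ :=
  if n.unpair.1 = 0 then
    (if E2 k n.unpair.2.unpair.1 n.unpair.2.unpair.2 then Nat.pair 0 n.unpair.2
     else Nat.pair 1 0)
  else if n.unpair.1 = 1 then Nat.pair 1 n.unpair.2
  else if n.unpair.2.unpair.1 = n.unpair.2.unpair.2 then Nat.pair 1 0
  else Nat.pair 2 n.unpair.2

lemma range_enum2 (k : ℕ) : Set.range (enum2 k) = posDiagEq Set.univ (E2 k) := by
  ext c
  constructor
  · rintro ⟨n, rfl⟩
    unfold enum2
    split_ifs with h1 h2 h3 h4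
    · exact mem_posDiag_iff.mpr (Or.inl ⟨n.unpair.2.unpair.1, n.unpair.2.unpair.2, h2,
        by rw [Nat.pair_unpair]⟩)
    · exact mem_posDiag_iff.mpr (Or.inr (Or.inl ⟨0, trivial, rfl⟩))
    · exact mem_posDiag_iff.mpr (Or.inr (Or.inl ⟨n.unpair.2, trivial, rfl⟩))
    · exact mem_posDiag_iff.mpr (Or.inr (Or.inl ⟨0, trivial, rfl⟩))
    · exact mem_posDiag_iff.mpr (Or.inr (Or.inr ⟨n.unpair.2.unpair.1, trivial,
        n.unpair.2.unpair.2, trivial, h4, by rw [Nat.pair_unpair]⟩))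
  · intro hc
    rcases mem_posDiag_iff.mp hc with ⟨a, b, hE, rfl⟩ | ⟨a, _, rfl⟩ | ⟨a, _, b, _, hab, rfl⟩
    · exact ⟨Nat.pair 0 (Nat.pair a b), by simp [enum2, Nat.unpair_pair, hE]⟩
    · exact ⟨Nat.pair 1 a, by simp [enum2, Nat.unpair_pair]⟩
    · exact ⟨Nat.pair 2 (Nat.pair a b), by simp [enum2, Nat.unpair_pair, hab]⟩

/-- Every positive diagram on domain univ is contained in that of the full relation. -/
lemma posDiag_subset_D1 (E : ℕ → ℕ → Prop) :
    posDiagEq Set.univ E ⊆ posDiagEq Set.univ E1 := by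
  intro c hc
  rcases mem_posDiag_iff.mp hc with ⟨a, b, _, rfl⟩ | h | h
  · exact mem_posDiag_iff.mpr (Or.inl ⟨a, b, trivial, rfl⟩)
  · exact mem_posDiag_iff.mpr (Or.inr (Or.inl h))
  · exact mem_posDiag_iff.mpr (Or.inr (Or.inr h))

lemma mem_le_foldr_max (l : List ℕ) (x : ℕ) (hx : x ∈ l) : x ≤ l.foldr max 0 := by
  induction l with
  | nil => simp at hx
  | cons hd tl ih =>
    rcases List.mem_cons.mp hx with rfl | h
    · exact le_max_left _ _
    · exact le_trans (ih h) (le_max_right _ _)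

/-- Facts from `D1` mentioning only numbers `< k` are true in `(univ, E2 k)`. -/
lemma mem_posDiag_E2 {c k : ℕ} (hk : c < k) (hc : c ∈ posDiagEq Set.univ E1) :
    c ∈ posDiagEq Set.univ (E2 k) := by
  rcases mem_posDiag_iff.mp hc with ⟨a, b, _, rfl⟩ | h | h
  · have ha : a < k := lt_of_le_of_lt
      (le_trans (Nat.left_le_pair a b) (Nat.right_le_pair 0 (Nat.pair a b))) hk
    have hb : b < k := lt_of_le_of_lt
      (le_trans (Nat.right_le_pair a b) (Nat.right_le_pair 0 (Nat.pair a b))) hk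
    exact mem_posDiag_iff.mpr (Or.inl ⟨a, b, Or.inl ⟨Or.inl ha, Or.inl hb⟩, rfl⟩)
  · exact mem_posDiag_iff.mpr (Or.inr (Or.inl h))
  · exact mem_posDiag_iff.mpr (Or.inr (Or.inr h))

lemma initSeg_length (f : ℕ → ℕ) (n : ℕ) : (initSeg f n).length = n := by
  simp [initSeg]

lemma initSeg_getElem (f : ℕ → ℕ) (n i : ℕ) (h : i < (initSeg f n).length) :
    (initSeg f n)[i] = f i := by
  simp [initSeg]

end W1W2Aux


open W1W2Aux in
/-- the class `{[ω:1], [ω:2]}` is not TxtEx-learnable: no learner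
`M : List ℕ → Option ℕ` (with `none = ?`) converges, on every text (enumeration of the
positive atomic diagram) of every equivalence structure of type `[ω:1]` or `[ω:2]` with
domain `⊆ ℕ`, to the correct index (`0` for `[ω:1]`, `1` for `[ω:2]`). -/
theorem class_w1_w2_not_txtEx_learnable :
    ¬ ∃ M : List ℕ → Option ℕ,
      (∀ A E, typeW1 A E → ∀ f : ℕ → ℕ, Set.range f = posDiagEq A E →
        ∃ N, ∀ n ≥ N, M (initSeg f n) = some 0) ∧
      (∀ A E, typeW2 A E → ∀ f : ℕ → ℕ, Set.range f = posDiagEq A E →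
        ∃ N, ∀ n ≥ N, M (initSeg f n) = some 1) := by
  rintro ⟨M, h1, h2⟩
  by_cases hlock : ∃ σ : List ℕ, (∀ x ∈ σ, x ∈ posDiagEq Set.univ E1) ∧
      ∀ τ : List ℕ, (∀ x ∈ τ, x ∈ posDiagEq Set.univ E1) → M (σ ++ τ) = some 0
  · -- Case A: locking sequence exists; build a text for a two-class structure extending σ.
    obtain ⟨σ, hσ, hlk⟩ := hlock
    set k : ℕ := σ.foldr max 0 + 1 with hk
    have hσ2 : ∀ x ∈ σ, x ∈ posDiagEq Set.univ (E2 k) := by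
      intro x hx
      exact mem_posDiag_E2 (by have := mem_le_foldr_max σ x hx; omega) (hσ x hx)
    set g : ℕ → ℕ := fun n => if h : n < σ.length then σ[n] else enum2 k (n - σ.length)
      with hg
    have hrange : Set.range g = posDiagEq Set.univ (E2 k) := by
      ext c
      constructor
      · rintro ⟨n, rfl⟩
        rw [hg]
        dsimp only
        split_ifs with h
        · exact hσ2 _ (List.getElem_mem h)
        · rw [← range_enum2 k]; exact ⟨n - σ.length, rfl⟩
      · intro hc
        rw [← range_enum2 k] at hc
        obtain ⟨m, rfl⟩ := hc
        refine ⟨σ.length + m, ?_⟩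
        rw [hg]
        simp
      -- end
    obtain ⟨N, hN⟩ := h2 Set.univ (E2 k) (typeW2_E2 k) g hrange
    have hseg : initSeg g (σ.length + N) = σ ++ initSeg (enum2 k) N := by
      apply List.ext_getElem
      · simp [initSeg_length, initSeg]
      · intro i hi1 hi2
        rw [initSeg_getElem]
        by_cases h : i < σ.length
        · rw [List.getElem_append_left h, hg]
          simp [h]
        · rw [List.getElem_append_right (by omega)]
          rw [initSeg_getElem, hg]
          simp [h]
    have hM1 : M (σ ++ initSeg (enum2 k) N) = some 1 := by
      rw [← hseg]; exact hN _ (by omega)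
    have hM0 : M (σ ++ initSeg (enum2 k) N) = some 0 := by
      apply hlk
      intro x hx
      simp only [initSeg, List.mem_map, List.mem_range] at hx
      obtain ⟨j, _, rfl⟩ := hx
      exact posDiag_subset_D1 (E2 k) (by rw [← range_enum2 k]; exact ⟨j, rfl⟩)
    rw [hM0] at hM1
    simp at hM1
  · -- Case B: no locking sequence; build a text for (univ, E1) on which M ≠ 0 i.o.
    push_neg at hlock
    have hlock' : ∀ σ : List ℕ, ∃ τ : List ℕ,
        (∀ x ∈ σ, x ∈ posDiagEq Set.univ E1) →
          (∀ x ∈ τ, x ∈ posDiagEq Set.univ E1) ∧ M (σ ++ τ) ≠ some 0 := by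
      intro σ
      by_cases h : ∀ x ∈ σ, x ∈ posDiagEq Set.univ E1
      · obtain ⟨τ, hτ1, hτ2⟩ := hlock σ h
        exact ⟨τ, fun _ => ⟨hτ1, hτ2⟩⟩
      · exact ⟨[], fun hc => absurd hc h⟩
    choose step hstep using hlock'
    set Sg : ℕ → List ℕ :=
      fun n => Nat.rec [] (fun m ih => (ih ++ step ih) ++ [enum1 m]) n with hSgdef
    have hSg : ∀ n, Sg (n + 1) = (Sg n ++ step (Sg n)) ++ [enum1 n] := fun n => rfl
    have hcont : ∀ n, ∀ x ∈ Sg n, x ∈ posDiagEq Set.univ E1 := by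
      intro n
      induction n with
      | zero => intro x hx; simp [hSgdef] at hx
      | succ m ih =>
        intro x hx
        rw [hSg] at hx
        rcases List.mem_append.mp hx with hx' | hx'
        · rcases List.mem_append.mp hx' with hx'' | hx''
          · exact ih x hx''
          · exact ((hstep (Sg m) ih).1) x hx''
        · rcases List.mem_singleton.mp hx' with rfl
          rw [← range_enum1]; exact ⟨m, rfl⟩
    have hchain : ∀ m n, m ≤ n → Sg m <+: Sg n := by
      intro m n hmn
      induction hmn with
      | refl => exact List.prefix_refl _
      | step _ ih =>
        exact ih.trans
          (by rw [hSg]; exact (List.prefix_append _ _).trans (List.prefix_append _ _))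
    have hlen : ∀ n, n ≤ (Sg n).length := by
      intro n
      induction n with
      | zero => simp
      | succ m ih => rw [hSg]; simp; omega
    set f : ℕ → ℕ := fun m => (Sg (m + 1)).getD m 0 with hfdef
    have hm1 : ∀ m : ℕ, m < (Sg (m + 1)).length := fun m =>
      lt_of_lt_of_le (Nat.lt_succ_self m) (hlen (m + 1))
    have hf : ∀ n m, (h : m < (Sg n).length) → f m = (Sg n)[m] := by
      intro n m h
      have h1 : f m = (Sg (m + 1))[m]'(hm1 m) := by
        rw [hfdef]; exact List.getD_eq_getElem _ _ (hm1 m)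
      rcases le_total (m + 1) n with hle | hle
      · rw [h1, (hchain _ _ hle).getElem (hm1 m)]
      · rw [h1, ← (hchain _ _ hle).getElem h]
    have hinit : ∀ (l : List ℕ) n, l <+: Sg n → initSeg f l.length = l := by
      intro l n hp
      apply List.ext_getElem
      · simp [initSeg_length]
      · intro i hi1 hi2
        rw [initSeg_getElem, hf n i (lt_of_lt_of_le hi2 hp.length_le), hp.getElem hi2]
    have hrange : Set.range f = posDiagEq Set.univ E1 := by
      ext c
      constructor
      · rintro ⟨m, rfl⟩
        have h1 : f m = (Sg (m + 1))[m]'(hm1 m) := by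
          rw [hfdef]; exact List.getD_eq_getElem _ _ (hm1 m)
        rw [h1]
        exact hcont (m + 1) _ (List.getElem_mem (hm1 m))
      · intro hc
        rw [← range_enum1] at hc
        obtain ⟨n, rfl⟩ := hc
        have hlenL : (Sg n ++ step (Sg n)).length < (Sg (n + 1)).length := by
          rw [hSg]; simp
        refine ⟨(Sg n ++ step (Sg n)).length, ?_⟩
        rw [hf (n + 1) _ hlenL, List.getElem_of_eq (hSg n) hlenL,
          List.getElem_append_right (le_refl _)]
        simp
    obtain ⟨N, hN⟩ := h1 Set.univ E1 typeW1_E1 f hrange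
    set L : List ℕ := Sg N ++ step (Sg N) with hL
    have hpre : L <+: Sg (N + 1) := by rw [hSg]; exact List.prefix_append _ _
    have hLlen : N ≤ L.length := by
      rw [hL, List.length_append]
      have := hlen N; omega
    have hM0 : M (initSeg f L.length) = some 0 := hN _ hLlen
    rw [hinit L (N + 1) hpre] at hM0
    exact (hstep (Sg N) (hcont N)).2 hM0
end

section
/- The class 𝔎 = {[ω:1], [ω:2]} is InfEx-learnable: there is a learner M from finite sequences of (positive and negative) atomic facts to {0,1,?} such that for every structure 𝒮 with domain ⊆ ℕ isomorphic to [ω:1] or [ω:2], and every informant 𝕀 enumerating the full basic diagram D(𝒮), M(𝕀↾n) converges to the correct index. -/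
/-- Code of the basic (full) diagram of `(A, E)`: the positive atomic diagram together
with the codes (tag 3) of the true negated atomic sentences `¬(a ∼ b)`. -/
def basicDiagEq (A : Set ℕ) (E : ℕ → ℕ → Prop) : Set ℕ :=
  posDiagEq A E ∪
    {c | ∃ a ∈ A, ∃ b ∈ A, ¬ E a b ∧ c = Nat.pair 3 (Nat.pair a b)}

/-- Tag `3` codes the negated equivalences `¬(a ∼ b)` in `basicDiagEq`. -/
abbrev IsNonEquivCode (c : ℕ) : Prop := c.unpair.1 = 3

def w1w2Learner (l : List ℕ) : Option ℕ :=
  if ∃ c ∈ l, IsNonEquivCode c then some 1 else some 0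

theorem exists_mem_initSeg_iff (f : ℕ → ℕ) (n : ℕ) (p : ℕ → Prop) :
    (∃ c ∈ initSeg f n, p c) ↔ ∃ i < n, p (f i) := by
  simp [initSeg]

theorem not_isNonEquivCode_of_mem_basicDiagEq {A : Set ℕ} {E : ℕ → ℕ → Prop}
    (hE : ∀ a ∈ A, ∀ b ∈ A, E a b) {c : ℕ} (hc : c ∈ basicDiagEq A E) :
    ¬ IsNonEquivCode c := by
  rcases hc with ((⟨a, b, -, rfl⟩ | ⟨a, -, rfl⟩) | ⟨a, -, b, -, -, rfl⟩) | ⟨a, ha, b, hb, hab, -⟩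
  iterate 3 simp
  · exact absurd (hE a ha b hb) hab

theorem pair_three_mem_basicDiagEq {A : Set ℕ} {E : ℕ → ℕ → Prop} {a b : ℕ}
    (ha : a ∈ A) (hb : b ∈ A) (hab : ¬ E a b) :
    Nat.pair 3 (Nat.pair a b) ∈ basicDiagEq A E :=
  Or.inr ⟨a, ha, b, hb, hab, rfl⟩

theorem w1w2Learner_initSeg_of_forall_equiv {A : Set ℕ} {E : ℕ → ℕ → Prop}
    (hE : ∀ a ∈ A, ∀ b ∈ A, E a b) {f : ℕ → ℕ} (hf : Set.range f = basicDiagEq A E) (n : ℕ) :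
    w1w2Learner (initSeg f n) = some 0 := by
  refine if_neg ?_
  rw [exists_mem_initSeg_iff]
  rintro ⟨i, -, hi⟩
  exact not_isNonEquivCode_of_mem_basicDiagEq hE (hf ▸ Set.mem_range_self i) hi

theorem w1w2Learner_initSeg_eventually_of_not_equiv {A : Set ℕ} {E : ℕ → ℕ → Prop} {a b : ℕ}
    (ha : a ∈ A) (hb : b ∈ A) (hab : ¬ E a b) {f : ℕ → ℕ}
    (hf : Set.range f = basicDiagEq A E) :
    ∃ N, ∀ n ≥ N, w1w2Learner (initSeg f n) = some 1 := by
  obtain ⟨k, hk⟩ : Nat.pair 3 (Nat.pair a b) ∈ Set.range f :=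
    hf ▸ pair_three_mem_basicDiagEq ha hb hab
  refine ⟨k + 1, fun n hn => if_pos ((exists_mem_initSeg_iff f n _).2 ⟨k, by omega, ?_⟩)⟩
  simp [IsNonEquivCode, hk]

/-- the class `{[ω:1], [ω:2]}` is InfEx-learnable: there is a learner
`M : List ℕ → Option ℕ` (with `none = ?`) which, on every informant (enumeration of the
basic diagram) of every equivalence structure of type `[ω:1]` or `[ω:2]` with domain
`⊆ ℕ`, converges to the correct index (`0` for `[ω:1]`, `1` for `[ω:2]`). -/
theorem class_w1_w2_infEx_learnable :
    ∃ M : List ℕ → Option ℕ,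
      (∀ A E, typeW1 A E → ∀ f : ℕ → ℕ, Set.range f = basicDiagEq A E →
        ∃ N, ∀ n ≥ N, M (initSeg f n) = some 0) ∧
      (∀ A E, typeW2 A E → ∀ f : ℕ → ℕ, Set.range f = basicDiagEq A E →
        ∃ N, ∀ n ≥ N, M (initSeg f n) = some 1) := by
  refine ⟨w1w2Learner, ?_, ?_⟩
  · rintro A E ⟨-, -, hE⟩ f hf
    exact ⟨0, fun n _ => w1w2Learner_initSeg_of_forall_equiv hE hf n⟩
  · rintro A E ⟨-, a, ha, b, hb, hab, -⟩ f hf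
    exact w1w2Learner_initSeg_eventually_of_not_equiv ha hb hab hf
end

section
/- Syntactic characterization implies text-learnability (abstract version): Let (B_i)_{i∈ℕ} be a family of infinite subsets of ℕ such that there exist families (a_i)_{i∈ℕ} of finite subsets of ℕ and (N_i)_{i∈ℕ} of subsets of ℕ with: for all i, j: (a_j ⊆ B_i and N_j ∩ B_i = ∅) if and only if i = j. Then there is a function M from finite sequences over ℕ to ℕ such that for every i and every surjective enumeration f : ℕ → B_i, the sequence n ↦ M(f↾n) converges with limit i. -/
/-- syntactic characterization implies text-learnability, abstract
version: let `(B i)` be a family of infinite subsets of `ℕ` and suppose there are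
finite sets `a j` (existential witnesses) and sets `N j` (forbidden facts) such that
`a j ⊆ B i` and `N j ∩ B i = ∅` hold exactly when `i = j`. Then there is a learner
`M : List ℕ → ℕ` which, on every enumeration of `B i`, converges to `i`. -/
theorem abstract_sigma2_implies_text_learnable
    (B : ℕ → Set ℕ) (hB : ∀ i, (B i).Infinite)
    (a : ℕ → Finset ℕ) (N : ℕ → Set ℕ)
    (h : ∀ i j, ((↑(a j) ⊆ B i) ∧ (N j ∩ B i = ∅)) ↔ i = j) :
    ∃ M : List ℕ → ℕ, ∀ i, ∀ f : ℕ → ℕ, Set.range f = B i →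
      ∃ n₀, ∀ n ≥ n₀, M (initSeg f n) = i := by
  classical
  refine ⟨fun σ => if hσ : ∃ j, (↑(a j) ⊆ {x | x ∈ σ}) ∧ (N j ∩ {x | x ∈ σ} = ∅)
      then Nat.find hσ else 0, ?_⟩
  intro i f hf
  have hii := (h i i).mpr rfl
  have hmem : ∀ x, x ∈ B i → ∃ k, f k = x := by
    intro x hx; rw [← hf] at hx; exact hx
  let idx : ℕ → ℕ := fun x => if hx : ∃ k, f k = x then Nat.find hx else 0
  have hidx : ∀ x, x ∈ B i → f (idx x) = x := by
    intro x hx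
    have hx' := hmem x hx
    simp only [idx, dif_pos hx']
    exact Nat.find_spec hx'
  let n₁ : ℕ := (a i).sup (fun x => idx x + 1)
  let w : ℕ → ℕ := fun j => if hj : (N j ∩ B i).Nonempty then hj.choose else 0
  let n₂ : ℕ := (Finset.range i).sup (fun j => idx (w j) + 1)
  refine ⟨max n₁ n₂, ?_⟩
  intro n hn
  have hsub : {x | x ∈ initSeg f n} ⊆ B i := by
    intro x hx
    simp only [initSeg, Set.mem_setOf_eq, List.mem_map, List.mem_range] at hx
    obtain ⟨k, -, rfl⟩ := hx
    rw [← hf]; exact ⟨k, rfl⟩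
  have hmem' : ∀ k, k < n → f k ∈ {x | x ∈ initSeg f n} := by
    intro k hk
    simp only [initSeg, Set.mem_setOf_eq, List.mem_map, List.mem_range]
    exact ⟨k, hk, rfl⟩
  have hPi : (↑(a i) ⊆ {x | x ∈ initSeg f n}) ∧ (N i ∩ {x | x ∈ initSeg f n} = ∅) := by
    constructor
    · intro x hx
      have hxB : x ∈ B i := hii.1 hx
      have hxa : x ∈ a i := hx
      have hlt : idx x < n := lt_of_lt_of_le (lt_of_lt_of_le (Nat.lt_succ_self _)
        (Finset.le_sup (f := fun x => idx x + 1) hxa)) (le_trans (le_max_left _ _) hn)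
      have := hmem' _ hlt
      rwa [hidx x hxB] at this
    · apply Set.eq_empty_of_forall_notMem
      intro x hx
      have hxin : x ∈ N i ∩ B i := ⟨hx.1, hsub hx.2⟩
      rw [hii.2] at hxin; exact hxin
  have hex : ∃ j, (↑(a j) ⊆ {x | x ∈ initSeg f n}) ∧
      (N j ∩ {x | x ∈ initSeg f n} = ∅) := ⟨i, hPi⟩
  simp only [dif_pos hex]
  rw [Nat.find_eq_iff]
  refine ⟨hPi, ?_⟩
  rintro j hj ⟨hj1, hj2⟩
  have hne : i ≠ j := fun e => absurd e.symm (Nat.ne_of_lt hj)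
  have hnot : ¬ ((↑(a j) ⊆ B i) ∧ (N j ∩ B i = ∅)) := fun hc => hne ((h i j).mp hc)
  have haj : ↑(a j) ⊆ B i := fun x hx => hsub (hj1 hx)
  have hNj : (N j ∩ B i).Nonempty := by
    rcases Set.eq_empty_or_nonempty (N j ∩ B i) with he | hne'
    · exact absurd ⟨haj, he⟩ hnot
    · exact hne'
  have hw : w j ∈ N j ∩ B i := by simp only [w, dif_pos hNj]; exact hNj.choose_spec
  have hwn : idx (w j) < n := lt_of_lt_of_le (lt_of_lt_of_le (Nat.lt_succ_self _)
    (Finset.le_sup (f := fun j => idx (w j) + 1) (Finset.mem_range.mpr hj)))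
    (le_trans (le_max_right _ _) hn)
  have hwin : w j ∈ N j ∩ {x | x ∈ initSeg f n} := by
    refine ⟨hw.1, ?_⟩
    have := hmem' _ hwn; rwa [hidx _ hw.2] at this
  rw [hj2] at hwin; exact hwin
end

section
/- If a family of structures 𝔎 = {B_i : i ∈ ℕ} is such that each B_i is uniquely distinguished within 𝔎 by a sentence of the form ∃x̄ (α(x̄) ∧ ⋀_{j∈J} ∀ȳ ¬β_j(x̄,ȳ)) with α and each β_j positive atomic (a Σᵖ₂ sentence), then 𝔎 is TxtEx-learnable. -/
/-- A structure with domain `⊆ ℕ` over the countable relational signature with relation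
symbols indexed by `ℕ`, where symbol `s` has arity `arity s` (the signature also
implicitly contains `=` and `≠`, treated as logical symbols in the diagram). -/
structure Str (arity : ℕ → ℕ) where
  dom : Set ℕ
  rel : ∀ s : ℕ, (Fin (arity s) → ℕ) → Prop
  rel_dom : ∀ s t, rel s t → ∀ k, t k ∈ dom

/-- Code of the positive atomic diagram of `S`: codes of the true atomic sentences
`R_s(ā)` (tag 0), `a = a` (tag 1) and `a ≠ b` (tag 2) with parameters in the domain. -/
def posDiag {arity : ℕ → ℕ} (S : Str arity) : Set ℕ :=
  {c | ∃ s t, S.rel s t ∧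
      c = Nat.pair 0 (Nat.pair s (Encodable.encode (List.ofFn t)))} ∪
    {c | ∃ a ∈ S.dom, c = Nat.pair 1 a} ∪
    {c | ∃ a ∈ S.dom, ∃ b ∈ S.dom, a ≠ b ∧ c = Nat.pair 2 (Nat.pair a b)}

/-- Isomorphism of structures. -/
def Iso {arity : ℕ → ℕ} (S T : Str arity) : Prop :=
  ∃ g : ℕ → ℕ, Set.BijOn g S.dom T.dom ∧
    ∀ (s : ℕ) (t : Fin (arity s) → ℕ), (∀ k, t k ∈ S.dom) →
      (S.rel s t ↔ T.rel s (fun k => g (t k)))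

/-- Positive atomic formulas with variables from `V`: relational atoms `R_s(x̄)`,
equality atoms `x = y` and (positive) inequality atoms `x ≠ y`. -/
inductive PAtom (arity : ℕ → ℕ) (V : Type) where
  | rel (s : ℕ) (t : Fin (arity s) → V)
  | eq (x y : V)
  | ne (x y : V)

/-- Satisfaction of a positive atomic formula in `S` under the assignment `v`. -/
def PAtom.Sat {arity : ℕ → ℕ} {V : Type} (S : Str arity) (v : V → ℕ) :
    PAtom arity V → Prop
  | .rel s t => S.rel s (fun k => v (t k))
  | .eq x y => v x ∈ S.dom ∧ v x = v y
  | .ne x y => v x ∈ S.dom ∧ v y ∈ S.dom ∧ v x ≠ v y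

/-- A Σᵖ₂ sentence of the form `∃x̄ (α(x̄) ∧ ⋀_{j∈J} ∀ȳ_j ¬β_j(x̄, ȳ_j))` with `α` and
each `β_j` positive atomic; the countable index set `J` is modelled by a partial
`ℕ`-indexed family (`none` entries are skipped). -/
structure SigmaP2 (arity : ℕ → ℕ) where
  m : ℕ
  α : PAtom arity (Fin m)
  β : ℕ → Option (Σ k : ℕ, PAtom arity (Fin m ⊕ Fin k))

/-- Satisfaction of a Σᵖ₂ sentence (all quantifiers range over the domain). -/
def SigmaP2.Sat {arity : ℕ → ℕ} (S : Str arity) (ψ : SigmaP2 arity) : Prop :=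
  ∃ v : Fin ψ.m → ℕ, (∀ idx, v idx ∈ S.dom) ∧ PAtom.Sat S v ψ.α ∧
    ∀ (j k : ℕ) (b : PAtom arity (Fin ψ.m ⊕ Fin k)), ψ.β j = some ⟨k, b⟩ →
      ∀ w : Fin k → ℕ, (∀ x, w x ∈ S.dom) → ¬ PAtom.Sat S (Sum.elim v w) b



/-!
The learner conjectures the index of the least candidate `p = ⟨i, v̄⟩` that is consistent
with the data seen so far: the domain facts and the atom `α(v̄)` of `ψ i` have appeared, and
no instance `β_j(v̄, w̄)` with `j` and the code of `w̄` below the current stage has appeared.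
A genuine witness of `ψ i` is consistent from some stage on, since everything it needs is
enumerated eventually and every fact of the text is true. A spurious candidate is refuted
from some stage on: either a fact it needs never appears, or a counterexample `β_j(v̄, w̄)`
eventually appears within the bound. Hence the guesses converge to the least genuine
witness, whose first component is `i` because `ψ i` distinguishes `B i` within the family.
-/

open Filter Encodable

variable {arity : ℕ → ℕ}

section posDiag

variable (S : Str arity)

theorem pair_zero_mem_posDiag (s : ℕ) (t : Fin (arity s) → ℕ) :
    Nat.pair 0 (Nat.pair s (encode (List.ofFn t))) ∈ posDiag S ↔ S.rel s t := by
  refine ⟨fun h => ?_, fun hr => Or.inl (Or.inl ⟨s, t, hr, rfl⟩)⟩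
  simp only [posDiag, Set.mem_union, Set.mem_ofPred_eq, Nat.pair_eq_pair] at h
  rcases h with ((⟨s', t', hr, -, rfl, ht⟩ | ⟨_, _, h, -⟩) | ⟨_, _, _, _, _, h, -⟩)
  · rwa [List.ofFn_injective (encode_injective ht)]
  all_goals exact absurd h (by norm_num)

theorem pair_one_mem_posDiag (a : ℕ) : Nat.pair 1 a ∈ posDiag S ↔ a ∈ S.dom := by
  refine ⟨fun h => ?_, fun ha => Or.inl (Or.inr ⟨a, ha, rfl⟩)⟩
  simp only [posDiag, Set.mem_union, Set.mem_ofPred_eq, Nat.pair_eq_pair] at h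
  rcases h with ((⟨_, _, _, h, -⟩ | ⟨b, hb, -, rfl⟩) | ⟨_, _, _, _, _, h, -⟩)
  · exact absurd h (by norm_num)
  · exact hb
  · exact absurd h (by norm_num)

theorem pair_two_mem_posDiag (a b : ℕ) :
    Nat.pair 2 (Nat.pair a b) ∈ posDiag S ↔ a ∈ S.dom ∧ b ∈ S.dom ∧ a ≠ b := by
  refine ⟨fun h => ?_, fun ⟨ha, hb, hab⟩ => Or.inr ⟨a, ha, b, hb, hab, rfl⟩⟩
  simp only [posDiag, Set.mem_union, Set.mem_ofPred_eq, Nat.pair_eq_pair] at h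
  rcases h with ((⟨_, _, _, h, -⟩ | ⟨_, _, h, -⟩) | ⟨a, ha, b, hb, hab, -, rfl, rfl⟩)
  · exact absurd h (by norm_num)
  · exact absurd h (by norm_num)
  · exact ⟨ha, hb, hab⟩

end posDiag

namespace PAtom

variable {V : Type}

def Seen (D : Set ℕ) (v : V → ℕ) : PAtom arity V → Prop
  | .rel s t => Nat.pair 0 (Nat.pair s (encode (List.ofFn fun k => v (t k)))) ∈ D
  | .eq x y => Nat.pair 1 (v x) ∈ D ∧ v x = v y
  | .ne x y => Nat.pair 2 (Nat.pair (v x) (v y)) ∈ D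

theorem seen_posDiag_iff (S : Str arity) (v : V → ℕ) (a : PAtom arity V) :
    a.Seen (posDiag S) v ↔ a.Sat S v := by
  cases a with
  | rel s t => exact pair_zero_mem_posDiag S s _
  | eq x y => exact and_congr_left' (pair_one_mem_posDiag S _)
  | ne x y => exact pair_two_mem_posDiag S _ _

theorem Seen.mono {D E : Set ℕ} (hDE : D ⊆ E) {v : V → ℕ} {a : PAtom arity V}
    (h : a.Seen D v) : a.Seen E v := by
  cases a with
  | rel s t => exact hDE h
  | eq x y => exact ⟨hDE h.1, h.2⟩
  | ne x y => exact hDE h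

theorem Seen.eventually {D : ℕ → Set ℕ} {P : Set ℕ} (hlim : ∀ c ∈ P, ∀ᶠ n in atTop, c ∈ D n)
    {v : V → ℕ} {a : PAtom arity V} (h : a.Seen P v) : ∀ᶠ n in atTop, a.Seen (D n) v := by
  cases a with
  | rel s t => exact hlim _ h
  | eq x y => exact (hlim _ h.1).mono fun n hn => ⟨hn, h.2⟩
  | ne x y => exact hlim _ h

theorem sat_iff_of_bijOn {S T : Str arity} {g : ℕ → ℕ} (hg : Set.BijOn g S.dom T.dom)
    (hrel : ∀ (s : ℕ) (t : Fin (arity s) → ℕ), (∀ k, t k ∈ S.dom) →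
      (S.rel s t ↔ T.rel s (fun k => g (t k))))
    {v : V → ℕ} (hv : ∀ x, v x ∈ S.dom) (a : PAtom arity V) :
    a.Sat S v ↔ a.Sat T (g ∘ v) := by
  have hinj : ∀ x y, g (v x) = g (v y) ↔ v x = v y :=
    fun x y => hg.injOn.eq_iff (hv x) (hv y)
  cases a with
  | rel s t => exact hrel s _ fun k => hv (t k)
  | eq x y => simp [Sat, hv x, hg.mapsTo (hv x), hinj]
  | ne x y => simp [Sat, hv x, hv y, hg.mapsTo (hv x), hg.mapsTo (hv y), hinj]

end PAtom

theorem Iso.symm {S T : Str arity} (h : Iso S T) : Iso T S := by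
  obtain ⟨g, hg, hrel⟩ := h
  refine ⟨_, hg.symm hg.invOn_invFunOn.symm, fun s t ht => ?_⟩
  rw [hrel s _ fun k => hg.surjOn.mapsTo_invFunOn (ht k)]
  simp only [hg.surjOn.rightInvOn_invFunOn (ht _)]

namespace SigmaP2

theorem Sat.of_iso {S T : Str arity} (hST : Iso S T) {φ : SigmaP2 arity} (h : φ.Sat S) :
    φ.Sat T := by
  obtain ⟨g, hg, hrel⟩ := hST
  obtain ⟨v, hv, hα, hβ⟩ := h
  refine ⟨g ∘ v, fun x => hg.mapsTo (hv x), (PAtom.sat_iff_of_bijOn hg hrel hv _).1 hα, ?_⟩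
  intro j k b hb w hw hsat
  set w₀ := Function.invFunOn g S.dom ∘ w
  have hw₀ : ∀ x, w₀ x ∈ S.dom := fun x => hg.surjOn.mapsTo_invFunOn (hw x)
  have hvw₀ : ∀ z, Sum.elim v w₀ z ∈ S.dom := Sum.forall.2 ⟨hv, hw₀⟩
  have hgvw₀ : g ∘ Sum.elim v w₀ = Sum.elim (g ∘ v) w := by
    ext (z | z)
    exacts [rfl, hg.surjOn.rightInvOn_invFunOn (hw z)]
  refine hβ j k b hb w₀ hw₀ ?_
  rwa [PAtom.sat_iff_of_bijOn hg hrel hvw₀, hgvw₀]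

theorem sat_iff_of_iso {S T : Str arity} (hST : Iso S T) (φ : SigmaP2 arity) :
    φ.Sat S ↔ φ.Sat T :=
  ⟨Sat.of_iso hST, Sat.of_iso hST.symm⟩

def Consistent (φ : SigmaP2 arity) (D : Set ℕ) (n : ℕ) (v : Fin φ.m → ℕ) : Prop :=
  (∀ x, Nat.pair 1 (v x) ∈ D) ∧ φ.α.Seen D v ∧
    ∀ j < n, ∀ k (b : PAtom arity (Fin φ.m ⊕ Fin k)), φ.β j = some ⟨k, b⟩ →
      ∀ w : Fin k → ℕ, encode w < n → (∀ y, Nat.pair 1 (w y) ∈ D) → ¬ b.Seen D (Sum.elim v w)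

theorem sat_iff_exists_forall_consistent (S : Str arity) (φ : SigmaP2 arity) :
    φ.Sat S ↔ ∃ v, ∀ n, φ.Consistent (posDiag S) n v := by
  simp only [Sat, Consistent, pair_one_mem_posDiag, PAtom.seen_posDiag_iff]
  refine exists_congr fun v => ⟨fun ⟨hv, hα, hβ⟩ n => ⟨hv, hα, ?_⟩, fun h => ⟨(h 0).1, (h 0).2.1, ?_⟩⟩
  · exact fun j _ k b hb w _ hw => hβ j k b hb w hw
  · exact fun j k b hb w hw => (h (max j (encode w) + 1)).2.2 j (by omega) k b hb w (by omega) hw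

section Approximation

variable {D : ℕ → Set ℕ} {P : Set ℕ} {φ : SigmaP2 arity} {v : Fin φ.m → ℕ}

theorem eventually_consistent (hsub : ∀ n, D n ⊆ P)
    (hlim : ∀ c ∈ P, ∀ᶠ n in atTop, c ∈ D n) (h : ∀ n, φ.Consistent P n v) :
    ∀ᶠ n in atTop, φ.Consistent (D n) n v := by
  filter_upwards [eventually_all.2 fun x => hlim _ ((h 0).1 x), (h 0).2.1.eventually hlim]
    with n hv hα
  exact ⟨hv, hα, fun j hj k b hb w hw hwD hseen =>
    (h n).2.2 j hj k b hb w hw (fun y => hsub n (hwD y)) (hseen.mono (hsub n))⟩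

theorem eventually_not_consistent (hsub : ∀ n, D n ⊆ P)
    (hlim : ∀ c ∈ P, ∀ᶠ n in atTop, c ∈ D n) {n₀ : ℕ} (h : ¬ φ.Consistent P n₀ v) :
    ∀ᶠ n in atTop, ¬ φ.Consistent (D n) n v := by
  by_cases hpos : (∀ x, Nat.pair 1 (v x) ∈ P) ∧ φ.α.Seen P v
  · obtain ⟨j, hj, k, b, hb, w, hw, hwP, hseen⟩ : ∃ j < n₀, ∃ k b, φ.β j = some ⟨k, b⟩ ∧
        ∃ w : Fin k → ℕ, encode w < n₀ ∧ (∀ y, Nat.pair 1 (w y) ∈ P) ∧ b.Seen P (Sum.elim v w) := by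
      simpa [Consistent, hpos] using h
    filter_upwards [eventually_all.2 fun y => hlim _ (hwP y), hseen.eventually hlim,
      eventually_ge_atTop n₀] with n hwD hseenD hn hcons
    exact hcons.2.2 j (by omega) k b hb w (by omega) hwD hseenD
  · exact Eventually.of_forall fun n hcons =>
      hpos ⟨fun x => hsub n (hcons.1 x), hcons.2.1.mono (hsub n)⟩

theorem eventually_consistent_iff (hsub : ∀ n, D n ⊆ P)
    (hlim : ∀ c ∈ P, ∀ᶠ n in atTop, c ∈ D n) :
    ∀ᶠ n in atTop, φ.Consistent (D n) n v ↔ ∀ n, φ.Consistent P n v := by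
  by_cases h : ∀ n, φ.Consistent P n v
  · exact (eventually_consistent hsub hlim h).mono fun n hn => iff_of_true hn h
  · obtain ⟨n₀, hn₀⟩ := not_forall.1 h
    exact (eventually_not_consistent hsub hlim hn₀).mono fun n hn => iff_of_false hn h

end Approximation

end SigmaP2

theorem eventually_exists_eq_and_iff {ι α β : Type*} {l : Filter ι} {e : α → β}
    (he : Function.Injective e) {c : β} {Q : ι → α → Prop} {R : α → Prop}
    (h : ∀ a, ∀ᶠ n in l, Q n a ↔ R a) :
    ∀ᶠ n in l, (∃ a, e a = c ∧ Q n a) ↔ ∃ a, e a = c ∧ R a := by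
  by_cases hc : ∃ a, e a = c
  · obtain ⟨a, rfl⟩ := hc
    simpa only [he.eq_iff, exists_eq_left] using h a
  · exact Eventually.of_forall fun n =>
      iff_of_false (fun ⟨a, ha, _⟩ => hc ⟨a, ha⟩) fun ⟨a, ha, _⟩ => hc ⟨a, ha⟩

open Classical in
theorem eventually_find_eq {T : ℕ → Prop} {G : ℕ → ℕ → Prop} (hT : ∃ p, T p)
    (hG : ∀ p, ∀ᶠ n in atTop, G n p ↔ T p) :
    ∀ᶠ n in atTop, ∃ h : ∃ p, G n p, Nat.find h = Nat.find hT := by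
  have hbelow : ∀ᶠ n in atTop, ∀ q ∈ Finset.range (Nat.find hT), ¬ G n q :=
    (eventually_all_finset _).2 fun q hq =>
      (hG q).mono fun n hn => hn.not.2 (Nat.find_min hT (Finset.mem_range.1 hq))
  filter_upwards [hG (Nat.find hT), hbelow] with n hfind hbelow
  have hG₀ : G n (Nat.find hT) := hfind.2 (Nat.find_spec hT)
  exact ⟨⟨_, hG₀⟩, (Nat.find_eq_iff _).2 ⟨hG₀, fun q hq => hbelow q (Finset.mem_range.2 hq)⟩⟩

theorem length_initSeg (f : ℕ → ℕ) (n : ℕ) : (initSeg f n).length = n := by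
  simp [initSeg]

theorem mem_initSeg {f : ℕ → ℕ} {n c : ℕ} : c ∈ initSeg f n ↔ ∃ m < n, f m = c := by
  simp [initSeg]

theorem setOf_mem_initSeg_subset (f : ℕ → ℕ) (n : ℕ) : {c | c ∈ initSeg f n} ⊆ Set.range f :=
  fun _ hc => (mem_initSeg.1 hc).imp fun _ => And.right

theorem eventually_mem_initSeg {f : ℕ → ℕ} {c : ℕ} (hc : c ∈ Set.range f) :
    ∀ᶠ n in atTop, c ∈ initSeg f n := by
  obtain ⟨m, rfl⟩ := hc
  exact (eventually_gt_atTop m).mono fun n hn => mem_initSeg.2 ⟨m, hn, rfl⟩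

section Candidates

variable (ψ : ℕ → SigmaP2 arity)

def WitnessCode (P : Set ℕ) (p : ℕ) : Prop :=
  ∃ v, encode v = p.unpair.2 ∧ ∀ n, (ψ p.unpair.1).Consistent P n v

def ConsistentCode (D : Set ℕ) (n p : ℕ) : Prop :=
  p < n ∧ ∃ v, encode v = p.unpair.2 ∧ (ψ p.unpair.1).Consistent D n v

variable {ψ}

theorem exists_witnessCode_of_sat {S : Str arity} {i : ℕ} (h : (ψ i).Sat S) :
    ∃ p, WitnessCode ψ (posDiag S) p := by
  obtain ⟨v, hv⟩ := (SigmaP2.sat_iff_exists_forall_consistent S _).1 h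
  refine ⟨Nat.pair i (encode v), ?_⟩
  rw [WitnessCode, Nat.unpair_pair]
  exact ⟨v, rfl, hv⟩

theorem WitnessCode.sat {S : Str arity} {p : ℕ} (h : WitnessCode ψ (posDiag S) p) :
    (ψ p.unpair.1).Sat S :=
  let ⟨v, _, hv⟩ := h
  (SigmaP2.sat_iff_exists_forall_consistent S _).2 ⟨v, hv⟩

theorem eventually_consistentCode_iff {D : ℕ → Set ℕ} {P : Set ℕ} (hsub : ∀ n, D n ⊆ P)
    (hlim : ∀ c ∈ P, ∀ᶠ n in atTop, c ∈ D n) (p : ℕ) :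
    ∀ᶠ n in atTop, ConsistentCode ψ (D n) n p ↔ WitnessCode ψ P p :=
  ((eventually_gt_atTop p).and (eventually_exists_eq_and_iff encode_injective
    (Q := fun n v => (ψ p.unpair.1).Consistent (D n) n v) fun _ =>
      SigmaP2.eventually_consistent_iff hsub hlim)).mono fun _ hn => by
    rw [ConsistentCode, and_iff_right hn.1, hn.2, WitnessCode]

end Candidates

open Classical in
noncomputable def learner (ψ : ℕ → SigmaP2 arity) (σ : List ℕ) : Option ℕ :=
  if h : ∃ p, ConsistentCode ψ {c | c ∈ σ} σ.length p then some (Nat.find h).unpair.1 else none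

/-- if each member `B i` of the family `𝔎 = {B i : i ∈ ℕ}` is uniquely
distinguished within `𝔎` by a Σᵖ₂ sentence `ψ i` of the form
`∃x̄ (α(x̄) ∧ ⋀_j ∀ȳ ¬β_j(x̄,ȳ))` with `α`, `β_j` positive atomic (i.e.
`B j ⊨ ψ i ↔ i = j`), then `𝔎` is TxtEx-learnable: some learner `M` converges to
`some i` on every text (enumeration of the positive atomic diagram) of every isomorphic
copy of `B i` with domain `⊆ ℕ`. -/
theorem sigmaP2_distinguished_implies_txtEx_learnable
    (arity : ℕ → ℕ) (B : ℕ → Str arity) (ψ : ℕ → SigmaP2 arity)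
    (h : ∀ i j, SigmaP2.Sat (B j) (ψ i) ↔ i = j) :
    ∃ M : List ℕ → Option ℕ,
      ∀ (i : ℕ) (S : Str arity), Iso S (B i) →
        ∀ f : ℕ → ℕ, Set.range f = posDiag S →
          ∃ N, ∀ n ≥ N, M (initSeg f n) = some i := by
  classical
  refine ⟨learner ψ, fun i S hiso f hf => ?_⟩
  have hsat : ∀ i', (ψ i').Sat S ↔ i' = i :=
    fun i' => ((ψ i').sat_iff_of_iso hiso).trans (h i' i)
  have hwit : ∃ p, WitnessCode ψ (posDiag S) p := exists_witnessCode_of_sat ((hsat i).2 rfl)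
  have hcons : ∀ p, ∀ᶠ n in atTop, ConsistentCode ψ {c | c ∈ initSeg f n} (initSeg f n).length p
      ↔ WitnessCode ψ (posDiag S) p := fun p =>
    (eventually_consistentCode_iff (fun n => hf ▸ setOf_mem_initSeg_subset f n)
      (fun _ hc => eventually_mem_initSeg (hf ▸ hc)) p).mono fun n hn => by
        rwa [length_initSeg]
  obtain ⟨N, hN⟩ := (eventually_find_eq hwit hcons).exists_forall_of_atTop
  refine ⟨N, fun n hn => ?_⟩
  obtain ⟨hex, hfind⟩ := hN n hn
  rw [learner, dif_pos hex, hfind, (hsat _).1 (Nat.find_spec hwit).sat]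
end

section
/- There is a Scott-continuous operator Γ embedding the class ℰ = {[n:ω] : n ≥ 1} into the class ℰ̃ = {[ω:ω, n:ω] : n ≥ 1}, given by copying the input structure infinitely many times alongside infinitely many infinite classes; in particular, for each n ≥ 1, Γ maps (the positive diagram of) any structure of type [n:ω] to (the positive diagram of) a structure of type [ω:ω, n:ω], and preserves and reflects isomorphism within the class. -/
/-- `(A, E)` has type `[n:ω]`: infinitely many classes, all of size exactly `n`. -/
def typeFin (A : Set ℕ) (E : ℕ → ℕ → Prop) (n : ℕ) : Prop :=
  isEquivOn A E ∧ (∀ a ∈ A, (classOf E a).ncard = n) ∧ (classesOf A E).Infinite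

/-- `(A, E)` has type `[ω:ω, n:ω]`: infinitely many infinite classes, infinitely many
classes of size exactly `n`, and no classes of any other size. -/
def typeMix (A : Set ℕ) (E : ℕ → ℕ → Prop) (n : ℕ) : Prop :=
  isEquivOn A E ∧
    (∀ a ∈ A, (classOf E a).Infinite ∨ (classOf E a).ncard = n) ∧
    {C ∈ classesOf A E | C.Infinite}.Infinite ∧
    {C ∈ classesOf A E | C.ncard = n}.Infinite

/-- Isomorphism of equivalence structures `(A, E)` and `(B, F)`. -/
def IsoEq (A : Set ℕ) (E : ℕ → ℕ → Prop) (B : Set ℕ) (F : ℕ → ℕ → Prop) : Prop :=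
  ∃ g : ℕ → ℕ, Set.BijOn g A B ∧ ∀ a ∈ A, ∀ b ∈ A, (E a b ↔ F (g a) (g b))

namespace S18

/-- decode the domain from a diagram code set -/
def Adec (X : Set ℕ) : Set ℕ := {a | Nat.pair 1 a ∈ X}

/-- decode the relation from a diagram code set -/
def Edec (X : Set ℕ) : ℕ → ℕ → Prop := fun a b => Nat.pair 0 (Nat.pair a b) ∈ X

/-- target domain: fresh elements `⟨c,0⟩` plus copies `⟨a,k+1⟩` of `a ∈ A` -/
def Bc (A : Set ℕ) : Set ℕ :=
  {u | ∃ c, u = Nat.pair c 0} ∪ {u | ∃ a ∈ A, ∃ k, u = Nat.pair a (k + 1)}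

/-- target relation -/
def Fc (E : ℕ → ℕ → Prop) : ℕ → ℕ → Prop := fun u v =>
  (∃ i j j', u = Nat.pair (Nat.pair i j) 0 ∧ v = Nat.pair (Nat.pair i j') 0) ∨
  (∃ a b k, E a b ∧ u = Nat.pair a (k + 1) ∧ v = Nat.pair b (k + 1))

def Gam (X : Set ℕ) : Set ℕ := posDiagEq (Bc (Adec X)) (Fc (Edec X))

lemma Adec_diag (A : Set ℕ) (E : ℕ → ℕ → Prop) : Adec (posDiagEq A E) = A := by
  ext a
  simp only [Adec, posDiagEq, Set.mem_union, Set.mem_setOf_eq]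
  constructor
  · rintro (((⟨x, y, _, h⟩ | ⟨x, _, h⟩) | ⟨x, _, y, _, _, h⟩))
    · exact absurd (Nat.pair_eq_pair.mp h).1 (by norm_num)
    · rw [Nat.pair_eq_pair] at h; exact h.2 ▸ ‹x ∈ A›
    · exact absurd (Nat.pair_eq_pair.mp h).1 (by norm_num)
  · intro ha; exact Or.inl (Or.inr ⟨a, ha, rfl⟩)

lemma Edec_diag (A : Set ℕ) (E : ℕ → ℕ → Prop) : Edec (posDiagEq A E) = E := by
  funext a b
  simp only [Edec, posDiagEq, Set.mem_union, Set.mem_setOf_eq]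
  apply propext
  constructor
  · rintro (((⟨x, y, hxy, h⟩ | ⟨x, _, h⟩) | ⟨x, _, y, _, _, h⟩))
    · rw [Nat.pair_eq_pair] at h
      obtain ⟨x1, x2⟩ := Nat.pair_eq_pair.mp h.2
      exact x1 ▸ x2 ▸ hxy
    · exact absurd (Nat.pair_eq_pair.mp h).1 (by norm_num)
    · exact absurd (Nat.pair_eq_pair.mp h).1 (by norm_num)
  · intro h; exact Or.inl (Or.inl ⟨a, b, h, rfl⟩)

lemma Gam_diag (A : Set ℕ) (E : ℕ → ℕ → Prop) :
    Gam (posDiagEq A E) = posDiagEq (Bc A) (Fc E) := by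
  unfold Gam; rw [Adec_diag, Edec_diag]

lemma Adec_mono : Monotone Adec := fun _ _ h _ ha => h ha

lemma Bc_mono {A A' : Set ℕ} (h : A ⊆ A') : Bc A ⊆ Bc A' := by
  rintro u (hu | ⟨a, ha, k, hk⟩)
  · exact Or.inl hu
  · exact Or.inr ⟨a, h ha, k, hk⟩

lemma Fc_mono {E E' : ℕ → ℕ → Prop} (h : ∀ a b, E a b → E' a b) :
    ∀ u v, Fc E u v → Fc E' u v := by
  rintro u v (hf | ⟨a, b, k, hab, hu, hv⟩)
  · exact Or.inl hf
  · exact Or.inr ⟨a, b, k, h _ _ hab, hu, hv⟩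

lemma posDiagEq_mono {A A' : Set ℕ} {E E' : ℕ → ℕ → Prop} (hA : A ⊆ A')
    (hE : ∀ a b, E a b → E' a b) : posDiagEq A E ⊆ posDiagEq A' E' := by
  rintro c ((⟨a, b, hab, rfl⟩ | ⟨a, ha, rfl⟩) | ⟨a, ha, b, hb, hne, rfl⟩)
  · exact Or.inl (Or.inl ⟨a, b, hE _ _ hab, rfl⟩)
  · exact Or.inl (Or.inr ⟨a, hA ha, rfl⟩)
  · exact Or.inr ⟨a, hA ha, b, hA hb, hne, rfl⟩

lemma Gam_mono : Monotone Gam := by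
  intro X Y h
  exact posDiagEq_mono (Bc_mono (Adec_mono h)) (Fc_mono (fun a b hab => h hab))

lemma Bc_compact {X : Set ℕ} {u : ℕ} (hu : u ∈ Bc (Adec X)) :
    ∃ D : Finset ℕ, ↑D ⊆ X ∧ u ∈ Bc (Adec ↑D) := by
  rcases hu with hu | ⟨a, ha, k, hk⟩
  · exact ⟨∅, by simp, Or.inl hu⟩
  · refine ⟨{Nat.pair 1 a}, ?_, Or.inr ⟨a, ?_, k, hk⟩⟩
    · simp only [Finset.coe_singleton, Set.singleton_subset_iff]; exact ha
    · simp [Adec]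

lemma Gam_compact (X : Set ℕ) (x : ℕ) :
    x ∈ Gam X ↔ ∃ D : Finset ℕ, ↑D ⊆ X ∧ x ∈ Gam ↑D := by
  constructor
  · rintro ((⟨u, v, huv, rfl⟩ | ⟨u, hu, rfl⟩) | ⟨u, hu, v, hv, hne, rfl⟩)
    · rcases huv with hf | ⟨a, b, k, hab, hu, hv⟩
      · exact ⟨∅, by simp, Or.inl (Or.inl ⟨u, v, Or.inl hf, rfl⟩)⟩
      · refine ⟨{Nat.pair 0 (Nat.pair a b)}, ?_, Or.inl (Or.inl
          ⟨u, v, Or.inr ⟨a, b, k, ?_, hu, hv⟩, rfl⟩)⟩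
        · simp only [Finset.coe_singleton, Set.singleton_subset_iff]; exact hab
        · simp [Edec]
    · obtain ⟨D, hD, hu'⟩ := Bc_compact hu
      exact ⟨D, hD, Or.inl (Or.inr ⟨u, hu', rfl⟩)⟩
    · obtain ⟨D1, hD1, hu'⟩ := Bc_compact hu
      obtain ⟨D2, hD2, hv'⟩ := Bc_compact hv
      refine ⟨D1 ∪ D2, ?_, Or.inr ⟨u, ?_, v, ?_, hne, rfl⟩⟩
      · push_cast; exact Set.union_subset hD1 hD2
      · exact Bc_mono (Adec_mono (by push_cast; exact Set.subset_union_left)) hu'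
      · exact Bc_mono (Adec_mono (by push_cast; exact Set.subset_union_right)) hv'
  · rintro ⟨D, hD, hx⟩
    exact Gam_mono hD hx


/-! ### equivalence class basics -/

lemma mem_classOf_self {A : Set ℕ} {E : ℕ → ℕ → Prop} (h : isEquivOn A E) {a : ℕ}
    (ha : a ∈ A) : a ∈ classOf E a := h.2.1 a ha

lemma classOf_subset {A : Set ℕ} {E : ℕ → ℕ → Prop} (h : isEquivOn A E) (a : ℕ) :
    classOf E a ⊆ A := fun _ hb => (h.1 _ _ hb).2

lemma classOf_eq_of_rel {A : Set ℕ} {E : ℕ → ℕ → Prop} (h : isEquivOn A E) {a b : ℕ}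
    (hab : E a b) : classOf E a = classOf E b := by
  ext x
  exact ⟨fun hx => h.2.2.2 _ _ _ (h.2.2.1 _ _ hab) hx, fun hx => h.2.2.2 _ _ _ hab hx⟩

lemma classOf_eq_of_overlap {A : Set ℕ} {E : ℕ → ℕ → Prop} (h : isEquivOn A E) {a b c : ℕ}
    (hc : c ∈ classOf E a) (hc' : c ∈ classOf E b) : classOf E a = classOf E b := by
  rw [classOf_eq_of_rel h hc, classOf_eq_of_rel h hc']

lemma classesOf_overlap {A : Set ℕ} {E : ℕ → ℕ → Prop} (h : isEquivOn A E) {C D : Set ℕ}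
    (hC : C ∈ classesOf A E) (hD : D ∈ classesOf A E) {c : ℕ} (hc : c ∈ C) (hc' : c ∈ D) :
    C = D := by
  obtain ⟨a, _, rfl⟩ := hC
  obtain ⟨b, _, rfl⟩ := hD
  exact classOf_eq_of_overlap h hc hc'

/-! ### structure of `Fc` classes -/

lemma Fc_fresh_iff {E : ℕ → ℕ → Prop} {c d : ℕ} :
    Fc E (Nat.pair c 0) (Nat.pair d 0) ↔ c.unpair.1 = d.unpair.1 := by
  constructor
  · rintro (⟨i, j, j', h1, h2⟩ | ⟨a, b, k, _, h1, _⟩)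
    · obtain ⟨hc, -⟩ := Nat.pair_eq_pair.mp h1
      obtain ⟨hd, -⟩ := Nat.pair_eq_pair.mp h2
      rw [hc, hd, Nat.unpair_pair, Nat.unpair_pair]
    · exact absurd (Nat.pair_eq_pair.mp h1).2 (by omega)
  · intro h
    refine Or.inl ⟨c.unpair.1, c.unpair.2, d.unpair.2, ?_, ?_⟩
    · rw [Nat.pair_unpair]
    · rw [h, Nat.pair_unpair]

lemma Fc_copy_iff {E : ℕ → ℕ → Prop} {a b k l : ℕ} :
    Fc E (Nat.pair a (k + 1)) (Nat.pair b (l + 1)) ↔ k = l ∧ E a b := by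
  constructor
  · rintro (⟨i, j, j', h1, h2⟩ | ⟨a', b', k', hab, h1, h2⟩)
    · exact absurd (Nat.pair_eq_pair.mp h1).2 (by omega)
    · obtain ⟨ha, hk⟩ := Nat.pair_eq_pair.mp h1
      obtain ⟨hb, hl⟩ := Nat.pair_eq_pair.mp h2
      refine ⟨by omega, ?_⟩
      rw [ha, hb]; exact hab
  · rintro ⟨rfl, hab⟩
    exact Or.inr ⟨a, b, k, hab, rfl, rfl⟩

lemma Fc_not_mixed {E : ℕ → ℕ → Prop} {c b l : ℕ} :
    ¬ Fc E (Nat.pair c 0) (Nat.pair b (l + 1)) := by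
  rintro (⟨i, j, j', h1, h2⟩ | ⟨a', b', k', _, h1, _⟩)
  · exact absurd (Nat.pair_eq_pair.mp h2).2 (by omega)
  · exact absurd (Nat.pair_eq_pair.mp h1).2 (by omega)

lemma Fc_not_mixed' {E : ℕ → ℕ → Prop} {c b l : ℕ} :
    ¬ Fc E (Nat.pair b (l + 1)) (Nat.pair c 0) := by
  rintro (⟨i, j, j', h1, h2⟩ | ⟨a', b', k', _, _, h2⟩)
  · exact absurd (Nat.pair_eq_pair.mp h1).2 (by omega)
  · exact absurd (Nat.pair_eq_pair.mp h2).2 (by omega)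

lemma Bc_cases {A : Set ℕ} {u : ℕ} (hu : u ∈ Bc A) :
    (∃ c, u = Nat.pair c 0) ∨ ∃ a ∈ A, ∃ k, u = Nat.pair a (k + 1) := hu

lemma isEquivOn_Bc {A : Set ℕ} {E : ℕ → ℕ → Prop} (h : isEquivOn A E) :
    isEquivOn (Bc A) (Fc E) := by
  refine ⟨?_, ?_, ?_, ?_⟩
  · rintro u v (⟨i, j, j', rfl, rfl⟩ | ⟨a, b, k, hab, rfl, rfl⟩)
    · exact ⟨Or.inl ⟨_, rfl⟩, Or.inl ⟨_, rfl⟩⟩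
    · exact ⟨Or.inr ⟨a, (h.1 _ _ hab).1, k, rfl⟩, Or.inr ⟨b, (h.1 _ _ hab).2, k, rfl⟩⟩
  · intro u hu
    rcases Bc_cases hu with ⟨c, rfl⟩ | ⟨a, ha, k, rfl⟩
    · exact Fc_fresh_iff.mpr rfl
    · exact Fc_copy_iff.mpr ⟨rfl, h.2.1 a ha⟩
  · rintro u v (⟨i, j, j', rfl, rfl⟩ | ⟨a, b, k, hab, rfl, rfl⟩)
    · exact Or.inl ⟨i, j', j, rfl, rfl⟩
    · exact Or.inr ⟨b, a, k, h.2.2.1 _ _ hab, rfl, rfl⟩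
  · rintro u v w (⟨i, j, j', rfl, rfl⟩ | ⟨a, b, k, hab, rfl, rfl⟩) hvw
    · rcases hvw with (⟨i', j2, j2', h1, rfl⟩ | ⟨a', b', k', _, h1, _⟩)
      · obtain ⟨hi, -⟩ := Nat.pair_eq_pair.mp h1
        obtain ⟨hi2, -⟩ := Nat.pair_eq_pair.mp hi.symm
        exact Or.inl ⟨i, j, j2', rfl, by rw [← hi2]⟩
      · exact absurd (Nat.pair_eq_pair.mp h1).2 (by omega)
    · rcases hvw with (⟨i', j2, j2', h1, rfl⟩ | ⟨a', b', k', hab', h1, rfl⟩)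
      · exact absurd (Nat.pair_eq_pair.mp h1).2 (by omega)
      · obtain ⟨hb, hk⟩ := Nat.pair_eq_pair.mp h1
        have hk' : k' = k := by omega
        exact Or.inr ⟨a, b', k, h.2.2.2 _ _ _ hab (hb ▸ hab'), rfl, by rw [hk']⟩
  
lemma classOf_Fc_fresh {E : ℕ → ℕ → Prop} (c : ℕ) :
    classOf (Fc E) (Nat.pair c 0) = {v | ∃ j', v = Nat.pair (Nat.pair c.unpair.1 j') 0} := by
  ext v
  simp only [classOf, Set.mem_setOf_eq]
  constructor
  · rintro (⟨i, j, j', h1, rfl⟩ | ⟨a, b, k, _, h1, _⟩)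
    · obtain ⟨hc, -⟩ := Nat.pair_eq_pair.mp h1
      exact ⟨j', by rw [hc, Nat.unpair_pair]⟩
    · exact absurd (Nat.pair_eq_pair.mp h1).2 (by omega)
  · rintro ⟨j', rfl⟩
    exact Or.inl ⟨c.unpair.1, c.unpair.2, j', by rw [Nat.pair_unpair], rfl⟩

lemma classOf_Fc_copy {E : ℕ → ℕ → Prop} (a k : ℕ) :
    classOf (Fc E) (Nat.pair a (k + 1)) = (fun b => Nat.pair b (k + 1)) '' classOf E a := by
  ext v
  simp only [classOf, Set.mem_setOf_eq, Set.mem_image]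
  constructor
  · rintro (⟨i, j, j', h1, _⟩ | ⟨a', b, k', hab, h1, rfl⟩)
    · exact absurd (Nat.pair_eq_pair.mp h1).2 (by omega)
    · obtain ⟨ha, hk⟩ := Nat.pair_eq_pair.mp h1
      refine ⟨b, ha ▸ hab, ?_⟩
      show Nat.pair b (k + 1) = Nat.pair b (k' + 1)
      have : k = k' := by omega
      rw [this]
  · rintro ⟨b, hb, rfl⟩
    exact Or.inr ⟨a, b, k, hb, rfl, rfl⟩

lemma pair_snd_injective {m : ℕ} : Function.Injective (fun b => Nat.pair b m) :=
  fun _ _ h => (Nat.pair_eq_pair.mp h).1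

lemma typeFin_nonempty {A : Set ℕ} {E : ℕ → ℕ → Prop} {n : ℕ} (h : typeFin A E n) :
    ∃ a, a ∈ A := by
  obtain ⟨C, a, ha, -⟩ := h.2.2.nonempty
  exact ⟨a, ha⟩

lemma typeMix_Bc {A : Set ℕ} {E : ℕ → ℕ → Prop} {n : ℕ} (hn : 1 ≤ n)
    (h : typeFin A E n) : typeMix (Bc A) (Fc E) n := by
  obtain ⟨hE, hcard, hinf⟩ := h
  refine ⟨isEquivOn_Bc hE, ?_, ?_, ?_⟩
  · intro u hu
    rcases Bc_cases hu with ⟨c, rfl⟩ | ⟨a, ha, k, rfl⟩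
    · left
      rw [classOf_Fc_fresh]
      exact Set.infinite_of_injective_forall_mem
        (f := fun j' => Nat.pair (Nat.pair c.unpair.1 j') 0)
        (fun x y hxy => by
          have := (Nat.pair_eq_pair.mp hxy).1
          exact (Nat.pair_eq_pair.mp this).2)
        (fun j' => ⟨j', rfl⟩)
    · right
      rw [classOf_Fc_copy, Set.ncard_image_of_injective _ pair_snd_injective]
      exact hcard a ha
  · apply Set.infinite_of_injective_forall_mem
      (f := fun i => classOf (Fc E) (Nat.pair (Nat.pair i 0) 0))
    · intro x y hxy
      have hx : Nat.pair (Nat.pair x 0) 0 ∈ classOf (Fc E) (Nat.pair (Nat.pair x 0) 0) := by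
        rw [classOf_Fc_fresh]; exact ⟨0, by rw [Nat.unpair_pair]⟩
      have hxy2 : classOf (Fc E) (Nat.pair (Nat.pair x 0) 0)
          = classOf (Fc E) (Nat.pair (Nat.pair y 0) 0) := hxy
      rw [hxy2, classOf_Fc_fresh, Nat.unpair_pair] at hx
      obtain ⟨j', hj'⟩ := hx
      exact (Nat.pair_eq_pair.mp (Nat.pair_eq_pair.mp hj').1).1
    · intro i
      refine ⟨⟨Nat.pair (Nat.pair i 0) 0, Or.inl ⟨_, rfl⟩, rfl⟩, ?_⟩
      rw [classOf_Fc_fresh]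
      exact Set.infinite_of_injective_forall_mem
        (f := fun j' => Nat.pair (Nat.pair (Nat.pair i 0).unpair.1 j') 0)
        (fun x y hxy => by
          have := (Nat.pair_eq_pair.mp hxy).1
          exact (Nat.pair_eq_pair.mp this).2)
        (fun j' => ⟨j', rfl⟩)
  · obtain ⟨a₀, ha₀⟩ := typeFin_nonempty ⟨hE, hcard, hinf⟩
    apply Set.infinite_of_injective_forall_mem
      (f := fun k => classOf (Fc E) (Nat.pair a₀ (k + 1)))
    · intro x y hxy
      have hx : Nat.pair a₀ (x + 1) ∈ classOf (Fc E) (Nat.pair a₀ (x + 1)) :=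
        mem_classOf_self (isEquivOn_Bc hE) (Or.inr ⟨a₀, ha₀, x, rfl⟩)
      have hxy2 : classOf (Fc E) (Nat.pair a₀ (x + 1))
          = classOf (Fc E) (Nat.pair a₀ (y + 1)) := hxy
      rw [hxy2, classOf_Fc_copy] at hx
      obtain ⟨b, -, hb⟩ := hx
      have := (Nat.pair_eq_pair.mp hb).2
      omega
    · intro k
      refine ⟨⟨Nat.pair a₀ (k + 1), Or.inr ⟨a₀, ha₀, k, rfl⟩, rfl⟩, ?_⟩
      rw [classOf_Fc_copy, Set.ncard_image_of_injective _ pair_snd_injective]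
      exact hcard a₀ ha₀

/-! ### lifting an isomorphism -/

lemma IsoEq_lift {A A' : Set ℕ} {E E' : ℕ → ℕ → Prop}
    (hE : isEquivOn A E) (hE' : isEquivOn A' E')
    (h : IsoEq A E A' E') : IsoEq (Bc A) (Fc E) (Bc A') (Fc E') := by
  obtain ⟨g, hbij, hrel⟩ := h
  classical
  refine ⟨fun u => if u.unpair.2 = 0 then u else Nat.pair (g u.unpair.1) u.unpair.2, ?_, ?_⟩
  · constructor
    · intro u hu
      rcases Bc_cases hu with ⟨c, rfl⟩ | ⟨a, ha, k, rfl⟩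
      · simp only [Nat.unpair_pair, if_pos True.intro]
        exact Or.inl ⟨c, rfl⟩
      · simp only [Nat.unpair_pair]
        rw [if_neg (by omega)]
        exact Or.inr ⟨g a, hbij.1 ha, k, rfl⟩
    constructor
    · intro u hu v hv huv
      rcases Bc_cases hu with ⟨c, rfl⟩ | ⟨a, ha, k, rfl⟩ <;>
        rcases Bc_cases hv with ⟨d, rfl⟩ | ⟨b, hb, l, rfl⟩ <;>
        simp only [Nat.unpair_pair] at huv
      · rwa [if_pos True.intro, if_pos True.intro] at huv
      · rw [if_pos True.intro, if_neg (by omega)] at huv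
        exact absurd (Nat.pair_eq_pair.mp huv).2 (by omega)
      · rw [if_neg (by omega), if_pos True.intro] at huv
        exact absurd (Nat.pair_eq_pair.mp huv).2 (by omega)
      · rw [if_neg (by omega), if_neg (by omega)] at huv
        obtain ⟨h1, h2⟩ := Nat.pair_eq_pair.mp huv
        rw [hbij.2.1 ha hb h1, h2]
    · intro v hv
      rcases Bc_cases hv with ⟨c, rfl⟩ | ⟨b, hb, l, rfl⟩
      · refine ⟨Nat.pair c 0, Or.inl ⟨c, rfl⟩, ?_⟩
        simp only [Nat.unpair_pair, if_pos True.intro]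
      · obtain ⟨a, ha, hga⟩ := hbij.2.2 hb
        refine ⟨Nat.pair a (l + 1), Or.inr ⟨a, ha, l, rfl⟩, ?_⟩
        simp only [Nat.unpair_pair]
        rw [if_neg (by omega), hga]
  · intro u hu v hv
    rcases Bc_cases hu with ⟨c, rfl⟩ | ⟨a, ha, k, rfl⟩ <;>
      rcases Bc_cases hv with ⟨d, rfl⟩ | ⟨b, hb, l, rfl⟩ <;>
      simp only [Nat.unpair_pair]
    · rw [if_pos True.intro, if_pos True.intro, Fc_fresh_iff, Fc_fresh_iff]
    · rw [if_pos True.intro, if_neg (by omega)]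
      exact ⟨fun h => absurd h Fc_not_mixed, fun h => absurd h Fc_not_mixed⟩
    · rw [if_neg (by omega), if_pos True.intro]
      exact ⟨fun h => absurd h Fc_not_mixed', fun h => absurd h Fc_not_mixed'⟩
    · rw [if_neg (by omega), if_neg (by omega), Fc_copy_iff, Fc_copy_iff]
      exact and_congr_right fun _ => hrel a ha b hb

/-! ### isomorphisms preserve class cardinality -/

lemma bijOn_classOf {A B : Set ℕ} {E F : ℕ → ℕ → Prop} {g : ℕ → ℕ}
    (hE : isEquivOn A E) (hF : isEquivOn B F)
    (hbij : Set.BijOn g A B) (hrel : ∀ a ∈ A, ∀ b ∈ A, (E a b ↔ F (g a) (g b)))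
    {a : ℕ} (ha : a ∈ A) : Set.BijOn g (classOf E a) (classOf F (g a)) := by
  refine ⟨?_, hbij.2.1.mono (classOf_subset hE a), ?_⟩
  · intro v hv
    exact (hrel a ha v (classOf_subset hE a hv)).mp hv
  · intro w hw
    obtain ⟨v, hv, rfl⟩ := hbij.2.2 (classOf_subset hF (g a) hw)
    exact ⟨v, (hrel a ha v hv).mpr hw, rfl⟩

lemma ncard_classOf_eq {A B : Set ℕ} {E F : ℕ → ℕ → Prop} {g : ℕ → ℕ}
    (hE : isEquivOn A E) (hF : isEquivOn B F)
    (hbij : Set.BijOn g A B) (hrel : ∀ a ∈ A, ∀ b ∈ A, (E a b ↔ F (g a) (g b)))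
    {a : ℕ} (ha : a ∈ A) : (classOf F (g a)).ncard = (classOf E a).ncard := by
  have h := bijOn_classOf hE hF hbij hrel ha
  rw [← h.image_eq, Set.ncard_image_of_injOn h.2.1]

lemma typeMix_iso_card {B B' : Set ℕ} {F F' : ℕ → ℕ → Prop} {n m : ℕ}
    (hn : 1 ≤ n) (hB : typeMix B F n) (hB' : typeMix B' F' m)
    (hiso : IsoEq B F B' F') : n = m := by
  obtain ⟨g, hbij, hrel⟩ := hiso
  obtain ⟨C, hC, hCn⟩ := hB.2.2.2.nonempty
  obtain ⟨a, ha, rfl⟩ := hC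
  have hga : g a ∈ B' := hbij.1 ha
  have hcard := ncard_classOf_eq hB.1 hB'.1 hbij hrel ha
  rw [hCn] at hcard
  rcases hB'.2.1 (g a) hga with hinf | hm
  · rw [hinf.ncard] at hcard; omega
  · omega

/-! ### constructing an isomorphism between two structures of type `[n:ω]` -/

lemma exists_fun_bijOn {α : Type*} {s t : Set α} (h : Nonempty (↥s ≃ ↥t)) :
    ∃ f : α → α, Set.BijOn f s t := by
  classical
  obtain ⟨e⟩ := h
  refine ⟨fun x => if hx : x ∈ s then (e ⟨x, hx⟩ : α) else x, ?_, ?_, ?_⟩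
  · intro x hx
    simp only [dif_pos hx]
    exact (e ⟨x, hx⟩).2
  · intro x hx y hy hxy
    simp only [dif_pos hx, dif_pos hy] at hxy
    have := e.injective (Subtype.coe_injective hxy)
    exact congrArg Subtype.val this
  · intro y hy
    refine ⟨(e.symm ⟨y, hy⟩ : α), (e.symm ⟨y, hy⟩).2, ?_⟩
    simp only [dif_pos (e.symm ⟨y, hy⟩).2]
    rw [Subtype.coe_eta, Equiv.apply_symm_apply]

lemma equiv_of_countable_infinite {α β : Type*} {s : Set α} {t : Set β}
    (hsc : s.Countable) (hsi : s.Infinite) (htc : t.Countable) (hti : t.Infinite) :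
    Nonempty (↥s ≃ ↥t) := by
  have i1 := hsc.to_subtype
  have i2 := htc.to_subtype
  have i3 := hsi.to_subtype
  have i4 := hti.to_subtype
  obtain ⟨d1⟩ := nonempty_denumerable_iff.mpr ⟨i1, i3⟩
  obtain ⟨d2⟩ := nonempty_denumerable_iff.mpr ⟨i2, i4⟩
  exact ⟨(@Denumerable.eqv _ d1).trans (@Denumerable.eqv _ d2).symm⟩

lemma classesOf_countable {A : Set ℕ} {E : ℕ → ℕ → Prop} (h : isEquivOn A E) :
    (classesOf A E).Countable := by
  rw [Set.countable_iff_exists_injOn]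
  refine ⟨fun C => sInf C, ?_⟩
  intro C hC D hD hCD
  have hCne : C.Nonempty := by
    obtain ⟨a, ha, rfl⟩ := hC; exact ⟨a, mem_classOf_self h ha⟩
  have hDne : D.Nonempty := by
    obtain ⟨a, ha, rfl⟩ := hD; exact ⟨a, mem_classOf_self h ha⟩
  have hCD' : sInf C = sInf D := hCD
  exact classesOf_overlap h hC hD (Nat.sInf_mem hCne) (hCD' ▸ Nat.sInf_mem hDne)

lemma exists_bijOn_of_ncard {s t : Set ℕ} {n : ℕ} (hn : 1 ≤ n)
    (hs : s.ncard = n) (ht : t.ncard = n) : ∃ f : ℕ → ℕ, Set.BijOn f s t := by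
  have hsf : s.Finite := Set.finite_of_ncard_ne_zero (by omega)
  have htf : t.Finite := Set.finite_of_ncard_ne_zero (by omega)
  have i1 := hsf.to_subtype
  have i2 := htf.to_subtype
  apply exists_fun_bijOn
  apply Finite.card_eq.mp
  rw [Nat.card_coe_set_eq, Nat.card_coe_set_eq, hs, ht]

lemma typeFin_iso {A A' : Set ℕ} {E E' : ℕ → ℕ → Prop} {n : ℕ} (hn : 1 ≤ n)
    (h : typeFin A E n) (h' : typeFin A' E' n) : IsoEq A E A' E' := by
  classical
  obtain ⟨hE, hcard, hinf⟩ := h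
  obtain ⟨hE', hcard', hinf'⟩ := h'
  obtain ⟨ψ, hψ⟩ := exists_fun_bijOn (α := Set ℕ)
    (equiv_of_countable_infinite (classesOf_countable hE) hinf (classesOf_countable hE') hinf')
  have hu : ∀ C ∈ classesOf A E, ∃ f : ℕ → ℕ, Set.BijOn f C (ψ C) := by
    intro C hC
    have hψC : ψ C ∈ classesOf A' E' := hψ.1 hC
    obtain ⟨a', ha', hC'⟩ := hψC
    obtain ⟨a, ha, rfl⟩ := hC
    exact exists_bijOn_of_ncard hn (hcard a ha) (hC' ▸ hcard' a' ha')
  choose! u hu using hu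
  have hQ : ∀ a ∈ A, classOf E a ∈ classesOf A E := fun a ha => ⟨a, ha, rfl⟩
  refine ⟨fun a => if ha : a ∈ A then u (classOf E a) a else a, ⟨?_, ?_, ?_⟩, ?_⟩
  · -- MapsTo
    intro a ha
    simp only [dif_pos ha]
    have h1 : u (classOf E a) a ∈ ψ (classOf E a) :=
      (hu _ (hQ a ha)).1 (mem_classOf_self hE ha)
    obtain ⟨c, hc, hceq⟩ := hψ.1 (hQ a ha)
    exact classOf_subset hE' c (hceq ▸ h1)
  · -- InjOn
    intro a ha b hb hab
    simp only [dif_pos ha, dif_pos hb] at hab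
    have h1 : u (classOf E a) a ∈ ψ (classOf E a) :=
      (hu _ (hQ a ha)).1 (mem_classOf_self hE ha)
    have h2 : u (classOf E b) b ∈ ψ (classOf E b) :=
      (hu _ (hQ b hb)).1 (mem_classOf_self hE hb)
    have hψeq : ψ (classOf E a) = ψ (classOf E b) :=
      classesOf_overlap hE' (hψ.1 (hQ a ha)) (hψ.1 (hQ b hb)) h1 (hab ▸ h2)
    have hCeq : classOf E a = classOf E b := hψ.2.1 (hQ a ha) (hQ b hb) hψeq
    refine (hu _ (hQ a ha)).2.1 (mem_classOf_self hE ha) ?_ ?_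
    · rw [hCeq]; exact mem_classOf_self hE hb
    · rw [hab, hCeq]
  · -- SurjOn
    intro a' ha'
    obtain ⟨C, hC, hCeq⟩ := hψ.2.2 (⟨a', ha', rfl⟩ : classOf E' a' ∈ classesOf A' E')
    have haC : a' ∈ ψ C := by rw [hCeq]; exact mem_classOf_self hE' ha'
    obtain ⟨x, hx, hxeq⟩ := (hu C hC).2.2 haC
    obtain ⟨a₀, ha₀, rfl⟩ := hC
    have hxA : x ∈ A := classOf_subset hE a₀ hx
    have hCx : classOf E x = classOf E a₀ := (classOf_eq_of_rel hE hx).symm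
    refine ⟨x, hxA, ?_⟩
    simp only [dif_pos hxA]
    rw [hCx]; exact hxeq
  · -- relation preservation
    intro a ha b hb
    simp only [dif_pos ha, dif_pos hb]
    have h1 : u (classOf E a) a ∈ ψ (classOf E a) :=
      (hu _ (hQ a ha)).1 (mem_classOf_self hE ha)
    have h2 : u (classOf E b) b ∈ ψ (classOf E b) :=
      (hu _ (hQ b hb)).1 (mem_classOf_self hE hb)
    constructor
    · intro hab
      have hCeq : classOf E a = classOf E b := classOf_eq_of_rel hE hab
      obtain ⟨c, hc, hceq⟩ := hψ.1 (hQ a ha)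
      have h2' : u (classOf E b) b ∈ ψ (classOf E a) := by rw [hCeq]; exact h2
      rw [hceq] at h1 h2'
      exact hE'.2.2.2 _ _ _ (hE'.2.2.1 _ _ h1) h2'
    · intro hab
      have hψa : ψ (classOf E a) = classOf E' (u (classOf E a) a) := by
        obtain ⟨c, hc, hceq⟩ := hψ.1 (hQ a ha)
        rw [hceq] at h1 ⊢
        exact classOf_eq_of_rel hE' h1
      have hψb : ψ (classOf E b) = classOf E' (u (classOf E b) b) := by
        obtain ⟨c, hc, hceq⟩ := hψ.1 (hQ b hb)
        rw [hceq] at h2 ⊢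
        exact classOf_eq_of_rel hE' h2
      have hψeq : ψ (classOf E a) = ψ (classOf E b) := by
        rw [hψa, hψb]
        exact classOf_eq_of_rel hE' hab
      have hCeq : classOf E a = classOf E b := hψ.2.1 (hQ a ha) (hQ b hb) hψeq
      have : b ∈ classOf E a := by rw [hCeq]; exact mem_classOf_self hE hb
      exact this

end S18

/-- there is a Scott-continuous (monotone and compact) operator `Γ`
embedding `ℰ = {[n:ω] : n ≥ 1}` into `ℰ̃ = {[ω:ω, n:ω] : n ≥ 1}`: for each `n ≥ 1`, `Γ`
maps the positive atomic diagram of any structure of type `[n:ω]` to the positive atomic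
diagram of a structure of type `[ω:ω, n:ω]`, and `Γ` preserves and reflects isomorphism
within the class. -/

theorem scott_embedding_E_into_Etilde :
    ∃ Γ : Set ℕ → Set ℕ,
      Monotone Γ ∧
      (∀ (X : Set ℕ) (x : ℕ), x ∈ Γ X ↔ ∃ D : Finset ℕ, ↑D ⊆ X ∧ x ∈ Γ ↑D) ∧
      (∀ n, 1 ≤ n → ∀ A E, typeFin A E n →
        ∃ B F, typeMix B F n ∧ Γ (posDiagEq A E) = posDiagEq B F) ∧
      (∀ n m, 1 ≤ n → 1 ≤ m → ∀ A E A' E', typeFin A E n → typeFin A' E' m →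
        ∀ B F B' F', isEquivOn B F → isEquivOn B' F' →
          Γ (posDiagEq A E) = posDiagEq B F → Γ (posDiagEq A' E') = posDiagEq B' F' →
          (IsoEq A E A' E' ↔ IsoEq B F B' F')) := by
  refine ⟨S18.Gam, S18.Gam_mono, S18.Gam_compact, ?_, ?_⟩
  · intro n hn A E hA
    exact ⟨S18.Bc A, S18.Fc E, S18.typeMix_Bc hn hA, S18.Gam_diag A E⟩
  · intro n m hn hm A E A' E' hA hA' B F B' F' hBF hBF' hΓ hΓ'
    rw [S18.Gam_diag] at hΓ hΓ'
    have hB : B = S18.Bc A := by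
      rw [← S18.Adec_diag B F, ← hΓ, S18.Adec_diag]
    have hF : F = S18.Fc E := by
      rw [← S18.Edec_diag B F, ← hΓ, S18.Edec_diag]
    have hB' : B' = S18.Bc A' := by
      rw [← S18.Adec_diag B' F', ← hΓ', S18.Adec_diag]
    have hF' : F' = S18.Fc E' := by
      rw [← S18.Edec_diag B' F', ← hΓ', S18.Edec_diag]
    subst hB hF hB' hF'
    constructor
    · intro hiso
      exact S18.IsoEq_lift hA.1 hA'.1 hiso
    · intro hiso
      have hnm : n = m :=
        S18.typeMix_iso_card hn (S18.typeMix_Bc hn hA) (S18.typeMix_Bc hm hA') hiso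
      subst hnm
      exact S18.typeFin_iso hn hA hA'
end
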